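/- arXiv:2501.15422 — 9 statements merged into one kernel-verified Lean document; each statement's English description precedes it below -/
import Mathlib

section
/- For n ≥ 3, the single-peaked domain with respect to the ordering o1, o2, ..., on fails the top-two condition: taking O' = {o1, o2, o3}, both o1 and o3 can be most-preferred within O', but no single-peaked preference ranks o1 first and o3 second (or o3 first and o1 second) within O'. -/
def top {α : Type*} (P : α → α → Prop) (O' : Set α) (a : α) : Prop :=
  a ∈ O' ∧ ∀ c ∈ O', c ≠ a → P a c

def topTwo {α : Type*} (D : Set (α → α → Prop)) : Prop :=
  ∀ O' : Set α, O'.Nonempty → ∀ a b : α, a ∈ O' → b ∈ O' → a ≠ b →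
    (∃ P ∈ D, top P O' a) → (∃ P ∈ D, top P O' b) →
      ∃ P0 ∈ D, top P0 O' a ∧ top P0 (O' \ {a}) b

/-- Single-peaked w.r.t. the ordering o1 → ... → on (objects are `Fin n`, o_k = k-1):
if p is the most-preferred object, the preference increases up to p and decreases after p. -/
def singlePeaked {n : ℕ} (P : Fin n → Fin n → Prop) : Prop :=
  IsStrictTotalOrder (Fin n) P ∧
    ∀ p : Fin n, top P Set.univ p →
      ∀ k : ℕ, ∀ hk : k + 1 < n,
        (k + 1 ≤ (p : ℕ) → P ⟨k + 1, hk⟩ ⟨k, by omega⟩) ∧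
        ((p : ℕ) ≤ k → P ⟨k, by omega⟩ ⟨k + 1, hk⟩)

/-- The single-peaked domain. -/
def SPDomain (n : ℕ) : Set (Fin n → Fin n → Prop) := {P | singlePeaked P}

/-!
A single-peaked preference never ranks a middle object below both of its neighbours: if its
peak lies at or beyond the middle object, that object beats its left neighbour, otherwise it
beats its right one. So within `{o₁, o₂, o₃}` the object `o₂` is never last, and no
single-peaked preference ranks `o₁` and `o₃` as its top two there. On the other hand each of
`o₁` and `o₃` is the peak of some single-peaked preference.
-/

lemma top.mono {α : Type*} {P : α → α → Prop} {s t : Set α} {a : α} (h : top P s a)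
    (ha : a ∈ t) (hts : t ⊆ s) : top P t a :=
  ⟨ha, fun c hc hca => h.2 c (hts hc) hca⟩

lemma top.eq {α : Type*} {P : α → α → Prop} [Std.Asymm P] {s : Set α} {a b : α}
    (ha : top P s a) (hb : top P s b) : a = b := by
  by_contra hab
  exact asymm (ha.2 b hb.1 (Ne.symm hab)) (hb.2 a ha.1 hab)

lemma exists_top_univ {α : Type*} [Finite α] [Nonempty α] (P : α → α → Prop)
    [IsStrictTotalOrder α P] : ∃ a, top P Set.univ a := by
  obtain ⟨m, -, hm⟩ := (Finite.wellFounded_of_trans_of_irrefl P).has_min Set.univ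
    Set.univ_nonempty
  refine ⟨m, Set.mem_univ m, fun c _ hcm => ?_⟩
  rcases trichotomous_of P m c with h | h | h
  · exact h
  · exact absurd h.symm hcm
  · exact absurd h (hm c (Set.mem_univ c))

namespace singlePeaked

variable {n : ℕ} {P : Fin n → Fin n → Prop}

lemma middle_rel_left_or_right (hP : singlePeaked P) (k : ℕ) (hk : k + 2 < n) :
    P ⟨k + 1, by omega⟩ ⟨k, by omega⟩ ∨ P ⟨k + 1, by omega⟩ ⟨k + 2, hk⟩ := by
  have := hP.1
  have : Nonempty (Fin n) := ⟨⟨k, by omega⟩⟩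
  obtain ⟨p, hp⟩ := exists_top_univ P
  by_cases hkp : k + 1 ≤ (p : ℕ)
  · exact .inl ((hP.2 p hp k (by omega)).1 hkp)
  · exact .inr ((hP.2 p hp (k + 1) hk).2 (by omega))

lemma not_rel_zero_one_and_rel_two_one [NeZero n] (hn : 3 ≤ n) (hP : singlePeaked P) :
    ¬ (P 0 1 ∧ P 2 1) := by
  have := hP.1
  have h0 : (0 : Fin n) = ⟨0, by omega⟩ := rfl
  have h1 : (1 : Fin n) = ⟨0 + 1, by omega⟩ := by
    simp [Fin.ext_iff, Nat.mod_eq_of_lt, show 1 < n by omega]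
  have h2 : (2 : Fin n) = ⟨0 + 2, by omega⟩ := by
    simp [Fin.ext_iff, Nat.mod_eq_of_lt, show 2 < n by omega]
  rw [h0, h1, h2]
  rintro ⟨h01, h21⟩
  rcases hP.middle_rel_left_or_right 0 (by omega) with h | h
  · exact asymm h h01
  · exact asymm h h21

end singlePeaked

open Function

/-- Lower rank means more preferred: `p` first, then the objects left of `p` outwards, then
those right of `p` outwards. -/
def peakRank {n : ℕ} (p a : Fin n) : ℕ := if a ≤ p then p - a else a

lemma peakRank_injective {n : ℕ} (p : Fin n) : Injective (peakRank p) := by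
  intro a b hab
  simp only [peakRank, Fin.le_def] at hab
  ext
  split_ifs at hab <;> omega

lemma top_univ_peakRank {n : ℕ} (p : Fin n) :
    top ((· < ·) on peakRank p) Set.univ p := by
  refine ⟨Set.mem_univ p, fun c _ hcp => ?_⟩
  have := Fin.val_ne_of_ne hcp
  simp only [onFun, peakRank, Fin.le_def]
  split_ifs <;> omega

lemma singlePeaked_peakRank {n : ℕ} (p : Fin n) : singlePeaked ((· < ·) on peakRank p) := by
  have := (peakRank_injective p).isStrictTotalOrder_onFun (· < ·)
  refine ⟨this, fun q hq k hk => ?_⟩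
  obtain rfl := hq.eq (top_univ_peakRank p)
  simp only [onFun, peakRank, Fin.le_def]
  constructor <;> intro <;> split_ifs <;> omega

theorem stmt5 {n : ℕ} [NeZero n] (hn : 3 ≤ n) :
    (∃ P ∈ SPDomain n, top P ({0, 1, 2} : Set (Fin n)) 0) ∧
    (∃ P ∈ SPDomain n, top P ({0, 1, 2} : Set (Fin n)) 2) ∧
    (∀ P ∈ SPDomain n, top P ({0, 1, 2} : Set (Fin n)) 0 →
      ¬ top P (({0, 1, 2} : Set (Fin n)) \ {0}) 2) ∧
    (∀ P ∈ SPDomain n, top P ({0, 1, 2} : Set (Fin n)) 2 →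
      ¬ top P (({0, 1, 2} : Set (Fin n)) \ {2}) 0) ∧
    ¬ topTwo (SPDomain n) := by
  have h01 : (0 : Fin n) ≠ 1 := by simp [Fin.ext_iff, Nat.mod_eq_of_lt, show 1 < n by omega]
  have h02 : (0 : Fin n) ≠ 2 := by simp [Fin.ext_iff, Nat.mod_eq_of_lt, show 2 < n by omega]
  have h12 : (1 : Fin n) ≠ 2 := by
    simp [Fin.ext_iff, Nat.mod_eq_of_lt, show 1 < n by omega, show 2 < n by omega]
  set S : Set (Fin n) := {0, 1, 2}
  have peak_of_mem : ∀ p ∈ S, ∃ P ∈ SPDomain n, top P S p := fun p hp =>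
    ⟨_, singlePeaked_peakRank p, (top_univ_peakRank p).mono hp (Set.subset_univ S)⟩
  have not_top_zero_two : ∀ P ∈ SPDomain n, top P S 0 → ¬ top P (S \ {0}) 2 :=
    fun P hP h0 h2 => hP.not_rel_zero_one_and_rel_two_one hn
      ⟨h0.2 1 (by simp [S]) h01.symm, h2.2 1 (by simp [S, h01.symm]) h12⟩
  refine ⟨peak_of_mem 0 (by simp [S]), peak_of_mem 2 (by simp [S]), not_top_zero_two,
    fun P hP h2 h0 => hP.not_rel_zero_one_and_rel_two_one hn
      ⟨h0.2 1 (by simp [S, h12]) h01.symm, h2.2 1 (by simp [S]) h12⟩, fun hS => ?_⟩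
  obtain ⟨P, hP, h0, h2⟩ := hS S ⟨0, by simp [S]⟩ 0 2 (by simp [S]) (by simp [S]) h02
    (peak_of_mem 0 (by simp [S])) (peak_of_mem 2 (by simp [S]))
  exact not_top_zero_two P hP h0 h2
end

section
/- For n ≥ 3 and any p ∈ {1, ..., n-1}, the single-peaked domain with two adjacent peaks D^{SP-2}(p), consisting of single-peaked preferences whose most-preferred object is o_p or o_{p+1}, satisfies the top-two condition. -/
/-- The single-peaked domain with the two adjacent peaks p and p+1. -/
def SP2Domain (n : ℕ) (p : Fin n) : Set (Fin n → Fin n → Prop) :=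
  {P | singlePeaked P ∧ ∃ t : Fin n, top P Set.univ t ∧ ((t : ℕ) = (p : ℕ) ∨ (t : ℕ) = (p : ℕ) + 1)}

open Set Function

theorem Fin.rel_of_forall_rel_succ {n : ℕ} (r : Fin n → Fin n → Prop) [IsTrans (Fin n) r]
    {i j : Fin n} (hij : i < j)
    (h : ∀ k : ℕ, ∀ hk : k + 1 < n, (i : ℕ) ≤ k → k < j → r ⟨k, by omega⟩ ⟨k + 1, hk⟩) :
    r i j := by
  obtain ⟨j, hj⟩ := j
  rw [Fin.lt_def] at hij
  dsimp only at hij h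
  induction j with
  | zero => omega
  | succ j ih =>
    have step := h j hj (by omega) (by omega)
    rcases (show (i : ℕ) < j ∨ (i : ℕ) = j by omega) with hlt | heq
    · exact _root_.trans (ih (by omega) hlt fun k hk hik hkj => h k hk hik (by omega)) step
    · rwa [show i = ⟨j, by omega⟩ from Fin.ext heq]

namespace singlePeaked

variable {n : ℕ} {P : Fin n → Fin n → Prop} {t i j : Fin n}

theorem rel_of_lt_of_le_peak (hP : singlePeaked P) (ht : top P univ t) (hij : i < j)
    (hjt : j ≤ t) : P j i :=
  haveI := hP.1
  Fin.rel_of_forall_rel_succ (swap P) hij fun k hk _ hkj => (hP.2 t ht k hk).1 (by omega)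

theorem rel_of_peak_le_of_lt (hP : singlePeaked P) (ht : top P univ t) (hti : t ≤ i)
    (hij : i < j) : P i j :=
  haveI := hP.1
  Fin.rel_of_forall_rel_succ P hij fun k hk hik _ => (hP.2 t ht k hk).2 (by omega)

end singlePeaked

theorem singlePeaked_of_utility {n : ℕ} {α : Type*} [LinearOrder α] {g : Fin n → α} {t : Fin n}
    (hg : Injective g) (hmono : StrictMonoOn g (Iic t)) (hanti : StrictAntiOn g (Ici t)) :
    singlePeaked (fun x y => g y < g x) ∧ top (fun x y => g y < g x) univ t := by
  have htop : top (fun x y => g y < g x) univ t := by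
    refine ⟨mem_univ t, fun c _ hc => ?_⟩
    rcases hc.lt_or_gt with h | h
    · exact hmono (mem_Iic.2 h.le) self_mem_Iic h
    · exact hanti self_mem_Ici (mem_Ici.2 h.le) h
  refine ⟨⟨{ trichotomous := fun x y h₁ h₂ => hg (le_antisymm (not_lt.1 h₁) (not_lt.1 h₂)),
              irrefl := fun x => lt_irrefl (g x),
              trans := fun x y z h₁ h₂ => h₂.trans h₁ }, ?_⟩, htop⟩
  intro s hs k hk
  obtain rfl : s = t := by
    by_contra hne
    exact lt_asymm (hs.2 t (mem_univ t) (Ne.symm hne)) (htop.2 s (mem_univ s) hne)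
  exact ⟨fun h => hmono (show k ≤ (s : ℕ) by omega) (show k + 1 ≤ (s : ℕ) from h) k.lt_succ_self,
    fun h => hanti (show (s : ℕ) ≤ k from h) (show (s : ℕ) ≤ k + 1 by omega) k.lt_succ_self⟩

/-- `x` lies weakly between `a` and the gap between `p` and `p + 1`. -/
def BetweenGap (p a x : ℕ) : Prop := (a ≤ x ∧ x ≤ p) ∨ (p < x ∧ x ≤ a)

instance (p a x : ℕ) : Decidable (BetweenGap p a x) := inferInstanceAs (Decidable (_ ∨ _))

section SP2Domain

variable {n : ℕ} {p : Fin n} {O' : Set (Fin n)} {P : Fin n → Fin n → Prop} {a b c : Fin n}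

theorem not_betweenGap_of_top (hP : P ∈ SP2Domain n p) (ha : top P O' a) (hc : c ∈ O')
    (hca : c ≠ a) : ¬BetweenGap p a c := by
  obtain ⟨hsp, t, ht, htp⟩ := hP
  have := hsp.1
  intro hac
  refine asymm (ha.2 c hc hca) ?_
  rcases hac with ⟨h₁, h₂⟩ | ⟨h₁, h₂⟩
  · exact hsp.rel_of_lt_of_le_peak ht (lt_of_le_of_ne h₁ (Ne.symm hca)) (by omega)
  · exact hsp.rel_of_peak_le_of_lt ht (by omega) (lt_of_le_of_ne h₂ hca)

end SP2Domain

def gapDist (p x : ℕ) : ℕ := if x ≤ p then p - x else x - (p + 1)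

/-- Tiers, best first: from `a` to the gap, from `b` to the gap, the rest of `b`'s side, the rest
of `a`'s side; within a tier, closer to the gap is better. Moving towards the gap never lowers the
tier, so the utility is single-peaked with its peak at `a`'s end of the gap. -/
def twoTopUtility {n : ℕ} (p a b x : Fin n) : ℕ :=
  (if BetweenGap p a x then 4 else if BetweenGap p b x then 3
    else if ((x : ℕ) ≤ p ↔ (b : ℕ) ≤ p) then 2 else 1) * n - gapDist p x

section twoTopUtility

variable {n : ℕ} {p a b t : Fin n}

theorem twoTopUtility_injective : Injective (twoTopUtility p a b) := by
  intro x y hxy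
  simp only [twoTopUtility, gapDist] at hxy
  ext
  split_ifs at hxy <;> simp only [BetweenGap] at * <;> omega

theorem twoTopUtility_strictMonoOn (ht : (t : ℕ) = if (a : ℕ) ≤ p then (p : ℕ) else p + 1) :
    StrictMonoOn (twoTopUtility p a b) (Iic t) := by
  intro x hx y hy hxy
  simp only [mem_Iic, Fin.le_def, ht] at hx hy
  rw [Fin.lt_def] at hxy
  simp only [twoTopUtility, gapDist]
  split_ifs at hx hy ⊢ <;> simp only [BetweenGap] at * <;> omega

theorem twoTopUtility_strictAntiOn (ht : (t : ℕ) = if (a : ℕ) ≤ p then (p : ℕ) else p + 1) :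
    StrictAntiOn (twoTopUtility p a b) (Ici t) := by
  intro x hx y hy hxy
  simp only [mem_Ici, Fin.le_def, ht] at hx hy
  rw [Fin.lt_def] at hxy
  simp only [twoTopUtility, gapDist]
  split_ifs at hx hy ⊢ <;> simp only [BetweenGap] at * <;> omega

theorem twoTopUtility_lt_right {c : Fin n} (hca : ¬BetweenGap p a c)
    (hcb : ¬BetweenGap p b c) : twoTopUtility p a b c < twoTopUtility p a b b := by
  simp only [twoTopUtility, gapDist]
  split_ifs <;> simp only [BetweenGap] at * <;> omega

theorem twoTopUtility_right_lt_left (hab : ¬BetweenGap p a b) :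
    twoTopUtility p a b b < twoTopUtility p a b a := by
  simp only [twoTopUtility, gapDist]
  split_ifs <;> simp only [BetweenGap] at * <;> omega

end twoTopUtility

theorem stmt6_general {n : ℕ} (p : Fin n) (hp : (p : ℕ) + 1 < n) :
    topTwo (SP2Domain n p) := by
  intro O' _ a b ha hb hab ⟨P, hP, hPa⟩ ⟨Q, hQ, hQb⟩
  have hba : ¬BetweenGap p a b := not_betweenGap_of_top hP hPa hb hab.symm
  have hlt_b : ∀ c ∈ O', c ≠ a → c ≠ b → twoTopUtility p a b c < twoTopUtility p a b b :=
    fun c hc hca hcb => twoTopUtility_lt_right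
      (not_betweenGap_of_top hP hPa hc hca) (not_betweenGap_of_top hQ hQb hc hcb)
  let t : Fin n := if (a : ℕ) ≤ p then p else ⟨p + 1, hp⟩
  have ht : (t : ℕ) = if (a : ℕ) ≤ p then (p : ℕ) else p + 1 := apply_ite Fin.val _ _ _
  obtain ⟨hsp, htop⟩ := singlePeaked_of_utility twoTopUtility_injective
    (twoTopUtility_strictMonoOn (b := b) ht) (twoTopUtility_strictAntiOn ht)
  refine ⟨_, ⟨hsp, t, htop, by split_ifs at ht <;> omega⟩, ⟨ha, fun c hc hca => ?_⟩,
    ⟨hb, hab.symm⟩, fun c hc hcb => hlt_b c hc.1 hc.2 hcb⟩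
  obtain rfl | hcb := eq_or_ne c b
  · exact twoTopUtility_right_lt_left hba
  · exact (hlt_b c hc hca hcb).trans (twoTopUtility_right_lt_left hba)

theorem stmt6 {n : ℕ} (hn : 3 ≤ n) (p : Fin n) (hp : (p : ℕ) + 1 < n) :
    topTwo (SP2Domain n p) :=
  stmt6_general p hp
end

section
/- For any partial order ≻ on the set of objects O, the partial agreement domain D^{PA}(≻), consisting of all strict linear orders on O that extend ≻, satisfies the top-two condition. -/
def PADomain {α : Type*} (s : α → α → Prop) : Set (α → α → Prop) :=
  {P | IsStrictTotalOrder α P ∧ ∀ a b : α, s a b → P a b}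

/-! Rank the objects first by a level and break ties by any linear extension of `s`. Objects
weakly above `a` get level 2, objects weakly above `b` one more; these sets are upward closed
because `s` is transitive, so the ranking still extends `s`. If `a` tops `O'` in some extension,
no other element of `O'` lies weakly above `a`, so `a` is the only element of `O'` of level at
least 2; similarly `b` is the only element of `O' \ {a}` of positive level. -/

open Relation

section

variable {α : Type*}

theorem PADomain_nonempty (s : α → α → Prop) [IsStrictOrder α s] : (PADomain s).Nonempty := by
  let := partialOrderOfSO s
  refine ⟨fun x y => toLinearExtension x < toLinearExtension y,
    inferInstanceAs (IsStrictTotalOrder (LinearExtension α) (· < ·)), fun x y h => ?_⟩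
  exact toLinearExtension.monotone.strictMono_of_injective (fun _ _ h => h) h

def lexBy {β : Type*} [LinearOrder β] (f : α → β) (L : α → α → Prop) (x y : α) : Prop :=
  f y < f x ∨ (f x = f y ∧ L x y)

theorem isStrictTotalOrder_lexBy {β : Type*} [LinearOrder β] (f : α → β) (L : α → α → Prop)
    [IsStrictTotalOrder α L] : IsStrictTotalOrder α (lexBy f L) where
  irrefl x := by
    rintro (h | ⟨-, h⟩)
    · exact lt_irrefl _ h
    · exact irrefl x h
  trans x y z := by
    rintro (hxy | ⟨hxy, hxy'⟩) (hyz | ⟨hyz, hyz'⟩)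
    · exact Or.inl (hyz.trans hxy)
    · exact Or.inl (hyz ▸ hxy)
    · exact Or.inl (hxy ▸ hyz)
    · exact Or.inr ⟨hxy.trans hyz, _root_.trans hxy' hyz'⟩
  trichotomous x y hxy hyx := by
    simp only [lexBy, not_or, not_and, not_lt] at hxy hyx
    have hf : f x = f y := le_antisymm hxy.1 hyx.1
    exact trichotomous_of L x y |>.resolve_left (hxy.2 hf) |>.resolve_right (hyx.2 hf.symm)

theorem lexBy_mem_PADomain {β : Type*} [LinearOrder β] {s L : α → α → Prop} {f : α → β}
    (hf : ∀ x y, s x y → f y ≤ f x) (hL : L ∈ PADomain s) : lexBy f L ∈ PADomain s := by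
  have := hL.1
  refine ⟨isStrictTotalOrder_lexBy f L, fun x y h => ?_⟩
  exact (hf x y h).lt_or_eq.imp id fun e => ⟨e.symm, hL.2 x y h⟩

theorem not_reflGen_of_top {s P : α → α → Prop} {O' : Set α} {a c : α} (hP : P ∈ PADomain s)
    (ha : top P O' a) (hc : c ∈ O') (hca : c ≠ a) : ¬ ReflGen s c a := by
  have := hP.1
  rintro (_ | h)
  · exact hca rfl
  · exact irrefl a (_root_.trans (ha.2 c hc hca) (hP.2 c a h))

open Classical in
noncomputable def topTwoLevel (s : α → α → Prop) (a b x : α) : ℕ :=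
  (if ReflGen s x a then 2 else 0) + (if ReflGen s x b then 1 else 0)

theorem topTwoLevel_le_of_rel {s : α → α → Prop} [IsTrans α s] (a b : α) {x y : α}
    (h : s x y) : topTwoLevel s a b y ≤ topTwoLevel s a b x := by
  have hup : ∀ {z}, ReflGen s y z → ReflGen s x z := _root_.trans (ReflGen.single h)
  unfold topTwoLevel
  split_ifs <;> simp_all

theorem topTwoLevel_lt_left {s : α → α → Prop} {a c : α} (b : α) (hca : ¬ ReflGen s c a) :
    topTwoLevel s a b c < topTwoLevel s a b a := by
  unfold topTwoLevel
  split_ifs <;> simp_all [ReflGen.refl]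

theorem topTwoLevel_lt_right {s : α → α → Prop} {a b c : α} (hca : ¬ ReflGen s c a)
    (hcb : ¬ ReflGen s c b) : topTwoLevel s a b c < topTwoLevel s a b b := by
  unfold topTwoLevel
  split_ifs <;> simp_all [ReflGen.refl]

end

theorem stmt9_general {α : Type*} (s : α → α → Prop) (hs : IsStrictOrder α s) :
    topTwo (PADomain s) := by
  rintro O' - a b ha hb hab ⟨Pa, hPa, htopa⟩ ⟨Pb, hPb, htopb⟩
  obtain ⟨L, hL⟩ := PADomain_nonempty s
  refine ⟨lexBy (topTwoLevel s a b) L,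
    lexBy_mem_PADomain (fun _ _ => topTwoLevel_le_of_rel a b) hL,
    ⟨ha, fun c hc hca => Or.inl ?_⟩, ⟨⟨hb, hab.symm⟩, fun c hc hcb => Or.inl ?_⟩⟩
  · exact topTwoLevel_lt_left b (not_reflGen_of_top hPa htopa hc hca)
  · exact topTwoLevel_lt_right (not_reflGen_of_top hPa htopa hc.1 hc.2)
      (not_reflGen_of_top hPb htopb hc.1 hcb)

theorem stmt9 {α : Type*} [Fintype α] (s : α → α → Prop) (hs : IsStrictOrder α s) :
    topTwo (PADomain s) :=
  stmt9_general s hs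
end

section
/- In the partial agreement domain D^{PA}(≻) for a partial order ≻ on O, for any nonempty O' ⊆ O and any a ∈ O', a is most-preferred within O' by some preference in the domain if and only if a is ≻-undominated in O' (i.e., there is no b ∈ O' with b ≻ a). -/
/-!
A preference in `PADomain s` ranking `a` first in `O'` extends `s`, so nothing in `O'` can
`s`-dominate `a`. Conversely, if `a` is undominated in `O'`, lift the set `U` of elements that are
`a` or dominate `a` above everything else: since `U` is closed under domination, this keeps a
strict order extending `s`, and any linear extension of it ranks `a` above the rest of `O'`,
none of which lies in `U`.
-/

section

variable {α : Type*}

theorem top.not_rel {P : α → α → Prop} [IsStrictOrder α P] {O' : Set α} {a b : α}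
    (h : top P O' a) (hb : b ∈ O') : ¬ P b a := by
  obtain rfl | hba := eq_or_ne b a
  · exact irrefl b
  · exact asymm (h.2 b hb hba)

theorem exists_isStrictTotalOrder_extension (s : α → α → Prop) [IsStrictOrder α s] :
    ∃ P, IsStrictTotalOrder α P ∧ ∀ a b, s a b → P a b := by
  let := partialOrderOfSO s
  refine ⟨@LT.lt (LinearExtension α) _, inferInstanceAs (IsStrictTotalOrder (LinearExtension α) _),
    fun a b h => ?_⟩
  exact toLinearExtension.monotone.strictMono_of_injective Function.injective_id h

def liftAbove (s : α → α → Prop) (U : Set α) (x y : α) : Prop :=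
  s x y ∨ (x ∈ U ∧ y ∉ U)

theorem isStrictOrder_liftAbove {s : α → α → Prop} [IsStrictOrder α s] {U : Set α}
    (hU : ∀ x y, s x y → y ∈ U → x ∈ U) : IsStrictOrder α (liftAbove s U) where
  irrefl x := by
    rintro (hxx | ⟨hx, hx'⟩)
    exacts [irrefl x hxx, hx' hx]
  trans x y z := by
    rintro (hxy | ⟨hx, hy⟩) (hyz | ⟨hy', hz⟩)
    · exact Or.inl (_root_.trans hxy hyz)
    · exact Or.inr ⟨hU x y hxy hy', hz⟩
    · exact Or.inr ⟨hx, fun hz => hy (hU y z hyz hz)⟩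
    · exact absurd hy' hy

theorem exists_top_of_forall_not_rel {s : α → α → Prop} [IsStrictOrder α s] {O' : Set α}
    {a : α} (ha : a ∈ O') (hund : ∀ b ∈ O', ¬ s b a) : ∃ P ∈ PADomain s, top P O' a := by
  set U : Set α := {x | s x a ∨ x = a}
  have hU : ∀ x y, s x y → y ∈ U → x ∈ U := by
    rintro x y hxy (hya | rfl)
    exacts [Or.inl (_root_.trans hxy hya), Or.inl hxy]
  have := isStrictOrder_liftAbove hU
  obtain ⟨P, hP, hext⟩ := exists_isStrictTotalOrder_extension (liftAbove s U)
  refine ⟨P, ⟨hP, fun x y h => hext x y (Or.inl h)⟩, ha, fun c hc hca => ?_⟩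
  exact hext a c (Or.inr ⟨Or.inr rfl, not_or.2 ⟨hund c hc, hca⟩⟩)

end

theorem stmt10_general {α : Type*} (s : α → α → Prop) (hs : IsStrictOrder α s)
    (O' : Set α) (a : α) (ha : a ∈ O') :
    (∃ P ∈ PADomain s, top P O' a) ↔ ∀ b ∈ O', ¬ s b a := by
  refine ⟨?_, exists_top_of_forall_not_rel ha⟩
  rintro ⟨P, ⟨hP, hext⟩, htop⟩ b hb hba
  exact htop.not_rel hb (hext b a hba)

theorem stmt10 {α : Type*} [Fintype α] (s : α → α → Prop) (hs : IsStrictOrder α s)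
    (O' : Set α) (hO' : O'.Nonempty) (a : α) (ha : a ∈ O') :
    (∃ P ∈ PADomain s, top P O' a) ↔ ∀ b ∈ O', ¬ s b a :=
  stmt10_general s hs O' a ha
end

section
/- For n ≥ 4, the circular domain with respect to the cyclic order o1 → o2 → ... → on → o1 fails the top-two condition: within the quadruple O' = {o1, o2, o3, o4}, the objects o1 and o3 can each be most-preferred within O' by some circular preference, but no circular preference ranks o1 first and o3 second (nor o3 first and o1 second) within O'. -/
/-- Clockwise circular preference with peak p: o_p ≻ o_{p+1} ≻ ... (indices mod n). -/
def cw {n : ℕ} (p : Fin n) : Fin n → Fin n → Prop := fun a b => (a - p).val < (b - p).val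

/-- Counterclockwise circular preference with peak p: o_p ≻ o_{p-1} ≻ ... (indices mod n). -/
def ccw {n : ℕ} (p : Fin n) : Fin n → Fin n → Prop := fun a b => (p - a).val < (p - b).val

/-- The circular domain w.r.t. the cyclic order o1 → o2 → ... → on → o1. -/
def circDomain (n : ℕ) : Set (Fin n → Fin n → Prop) := {P | ∃ p : Fin n, P = cw p ∨ P = ccw p}

namespace Fin

variable {n : ℕ} [NeZero n]

theorem val_add_one_eq_or (x : Fin n) :
    (x + 1).val = x.val + 1 ∨ ((x + 1).val = 0 ∧ x.val + 1 = n) := by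
  obtain ⟨m, rfl⟩ := Nat.exists_eq_succ_of_ne_zero (NeZero.ne n)
  rw [val_add_one]
  split_ifs with h
  · exact Or.inr ⟨rfl, by simp [h]⟩
  · exact Or.inl rfl

open Fin.CommRing in
theorem not_alternating_lt (hn : 3 ≤ n) (x : Fin n) :
    ¬ (x < x + 1 ∧ x < x + 3 ∧ x + 2 < x + 1 ∧ x + 2 < x + 3) := by
  rw [show x + 3 = x + 1 + 1 + 1 by ring, show x + 2 = x + 1 + 1 by ring]
  simp only [lt_def]
  rcases val_add_one_eq_or x with h₁ | h₁ <;>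
  rcases val_add_one_eq_or (x + 1) with h₂ | h₂ <;>
  rcases val_add_one_eq_or (x + 1 + 1) with h₃ | h₃ <;> omega

open Fin.CommRing in
theorem not_alternating_gt (hn : 3 ≤ n) (x : Fin n) :
    ¬ (x + 3 < x + 2 ∧ x + 3 < x ∧ x + 1 < x + 2 ∧ x + 1 < x) := by
  rw [show x + 3 = x + 1 + 1 + 1 by ring, show x + 2 = x + 1 + 1 by ring]
  simp only [lt_def]
  rcases val_add_one_eq_or x with h₁ | h₁ <;>
  rcases val_add_one_eq_or (x + 1) with h₂ | h₂ <;>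
  rcases val_add_one_eq_or (x + 1 + 1) with h₃ | h₃ <;> omega

end Fin

section CircularDomain

variable {n : ℕ} [NeZero n]

theorem cw_self_left_iff (p c : Fin n) : cw p p c ↔ c ≠ p := by
  rw [cw, sub_self, Fin.val_zero, Nat.pos_iff_ne_zero, Fin.val_ne_zero_iff, sub_ne_zero]

theorem top_cw_self {O' : Set (Fin n)} {p : Fin n} (hp : p ∈ O') : top (cw p) O' p :=
  ⟨hp, fun _ _ hc => (cw_self_left_iff _ _).2 hc⟩

open Fin.CommRing in
theorem not_alternating_of_mem_circDomain (hn : 3 ≤ n) {P : Fin n → Fin n → Prop}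
    (hP : P ∈ circDomain n) (a : Fin n) :
    ¬ (P a (a + 1) ∧ P a (a + 3) ∧ P (a + 2) (a + 1) ∧ P (a + 2) (a + 3)) := by
  obtain ⟨p, rfl | rfl⟩ := hP
  · -- the ranks of `a, a+1, a+2, a+3` under `cw p` are consecutive from `a - p`
    simp only [cw, ← Fin.lt_def]
    rw [show a + 1 - p = a - p + 1 by abel, show a + 2 - p = a - p + 2 by abel,
      show a + 3 - p = a - p + 3 by abel]
    exact Fin.not_alternating_lt hn (a - p)
  · -- under `ccw p` it is `a+3, a+2, a+1, a` whose ranks are consecutive, from `p - (a + 3)`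
    simp only [ccw, ← Fin.lt_def]
    rw [show p - a = p - (a + 3) + 3 by abel, show p - (a + 1) = p - (a + 3) + 2 by ring,
      show p - (a + 2) = p - (a + 3) + 1 by ring]
    exact Fin.not_alternating_gt hn (p - (a + 3))

end CircularDomain

theorem rel_of_top_of_top_sdiff {α : Type*} {P : α → α → Prop} {O' : Set α} {a b c : α}
    (ha : top P O' a) (hb : top P (O' \ {a}) b) (hc : c ∈ O') (hca : c ≠ a) (hcb : c ≠ b) :
    P a c ∧ P b c :=
  ⟨ha.2 c hc hca, hb.2 c ⟨hc, hca⟩ hcb⟩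

theorem stmt11 {n : ℕ} [NeZero n] (hn : 4 ≤ n) :
    (∃ P ∈ circDomain n, top P ({0, 1, 2, 3} : Set (Fin n)) 0) ∧
    (∃ P ∈ circDomain n, top P ({0, 1, 2, 3} : Set (Fin n)) 2) ∧
    (∀ P ∈ circDomain n, top P ({0, 1, 2, 3} : Set (Fin n)) 0 →
      ¬ top P (({0, 1, 2, 3} : Set (Fin n)) \ {0}) 2) ∧
    (∀ P ∈ circDomain n, top P ({0, 1, 2, 3} : Set (Fin n)) 2 →
      ¬ top P (({0, 1, 2, 3} : Set (Fin n)) \ {2}) 0) := by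
  have h₁ : 1 % n = 1 := Nat.mod_eq_of_lt (by omega)
  have h₂ : 2 % n = 2 := Nat.mod_eq_of_lt (by omega)
  have h₃ : 3 % n = 3 := Nat.mod_eq_of_lt (by omega)
  have h10 : (1 : Fin n) ≠ 0 := by simp [Fin.ext_iff, h₁]
  have h12 : (1 : Fin n) ≠ 2 := by simp [Fin.ext_iff, h₁, h₂]
  have h30 : (3 : Fin n) ≠ 0 := by simp [Fin.ext_iff, h₃]
  have h32 : (3 : Fin n) ≠ 2 := by simp [Fin.ext_iff, h₂, h₃]
  have hsep := fun P (hP : P ∈ circDomain n) =>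
    not_alternating_of_mem_circDomain (by omega) hP (0 : Fin n)
  simp only [zero_add] at hsep
  refine ⟨⟨cw 0, ⟨0, .inl rfl⟩, top_cw_self (by simp)⟩, ⟨cw 2, ⟨2, .inl rfl⟩, top_cw_self (by simp)⟩,
    fun P hP h0 h2 => hsep P hP ?_, fun P hP h2 h0 => hsep P hP ?_⟩
  · obtain ⟨h01, h21⟩ := rel_of_top_of_top_sdiff h0 h2 (by simp) h10 h12
    obtain ⟨h03, h23⟩ := rel_of_top_of_top_sdiff h0 h2 (by simp) h30 h32
    exact ⟨h01, h03, h21, h23⟩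
  · obtain ⟨h21, h01⟩ := rel_of_top_of_top_sdiff h2 h0 (by simp) h12 h10
    obtain ⟨h23, h03⟩ := rel_of_top_of_top_sdiff h2 h0 (by simp) h32 h30
    exact ⟨h01, h03, h21, h23⟩
end

section
/- If a domain D satisfies the top-two condition, then any mechanism φ on D^N that is individually rational, pair efficient, and strategyproof coincides with the Top Trading Cycles (TTC) mechanism on every profile in D^N. -/
/-! Housing market: agents and objects are both `Fin n`; agent i is endowed with
object i. A preference is a strict linear order on objects, modelled as a binary
relation (`P a b` means a is strictly preferred to b). -/

abbrev PrefRel (n : ℕ) := Fin n → Fin n → Prop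

/-- A preference profile where agent i's preference must lie in the domain `Ds i`. -/
def Profile (n : ℕ) (Ds : Fin n → Set (PrefRel n)) : Type := {Pr : Fin n → PrefRel n // ∀ i, Pr i ∈ Ds i}

/-- Individual rationality: every agent weakly prefers their assignment to their endowment. -/
def IR {n : ℕ} {Ds : Fin n → Set (PrefRel n)} (φ : Profile n Ds → Fin n → Fin n) : Prop :=
  ∀ P : Profile n Ds, ∀ i : Fin n, φ P i = i ∨ P.1 i (φ P i) i

/-- Strategyproofness: truth-telling is weakly dominant within the domain. -/
def SP {n : ℕ} {Ds : Fin n → Set (PrefRel n)} (φ : Profile n Ds → Fin n → Fin n) : Prop :=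
  ∀ P Q : Profile n Ds, ∀ i : Fin n, (∀ j, j ≠ i → Q.1 j = P.1 j) →
    φ P i = φ Q i ∨ P.1 i (φ P i) (φ Q i)

/-- Pair efficiency: no two agents each strictly prefer the other's assignment. -/
def PairEff {n : ℕ} {Ds : Fin n → Set (PrefRel n)} (φ : Profile n Ds → Fin n → Fin n) : Prop :=
  ∀ P : Profile n Ds, ∀ i j : Fin n, ¬ (P.1 i (φ P j) (φ P i) ∧ P.1 j (φ P i) (φ P j))

/-- Pareto efficiency: any allocation that weakly improves upon φ(P) for every agent
coincides with φ(P). -/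
def ParetoEff {n : ℕ} {Ds : Fin n → Set (PrefRel n)} (φ : Profile n Ds → Fin n → Fin n) : Prop :=
  ∀ P : Profile n Ds, ∀ y : Fin n → Fin n, Function.Bijective y →
    (∀ i, y i = φ P i ∨ P.1 i (y i) (φ P i)) → ∀ i, y i = φ P i

/-- `x` is the Top Trading Cycles allocation at the profile `Pr`: there is an assignment
of rounds `r` to agents (= objects, via endowment) such that each agent i receives their
most preferred object among objects whose owner is removed no earlier than i, and the
owner of the object i receives is removed in the same round as i. -/
def isTTC {n : ℕ} (Pr : Fin n → PrefRel n) (x : Fin n → Fin n) : Prop :=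
  Function.Bijective x ∧ ∃ r : Fin n → ℕ, ∀ i : Fin n,
    r (x i) = r i ∧ ∀ o : Fin n, r i ≤ r o → o ≠ x i → Pr i (x i) o


/-! TTC removes the trading cycles of the top-choice graph round by round, so it suffices to show
that `φ` carries out each such cycle once the agents of the earlier rounds report as before: by
bijectivity the agents of the cycle can then only receive objects that are still present.
This is proved by induction on the length of the cycle `c₀ → c₁ → c₂ → ⋯`. If every agent ranks
its own object second, individual rationality leaves each one its own object or its successor's,
and by injectivity one trade propagates around the cycle. If instead everyone keeps its object,
a 2-cycle contradicts pair efficiency. In a longer cycle, `c₀` reporting `c₂` first and `c₀`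
second shortens the cycle, so `c₀` would get `c₂`; by strategyproofness, `c₀` reporting `c₁` first
and `c₂` second then gets `c₂` while `c₁` keeps `c₁`, again contradicting pair efficiency.
Finally, by the top-two condition an agent that does not rank its own object second may switch to
a preference that does, and strategyproofness carries the outcome back. -/

open Function Equiv Equiv.Perm Finset

section Preferences

variable {α : Type*} {P : α → α → Prop} {S : Set α} {a b x : α}

theorem exists_top [Finite α] [IsStrictTotalOrder α P] (hS : S.Nonempty) : ∃ a, top P S a := by
  obtain ⟨a, ha, hmax⟩ := (Finite.wellFounded_of_trans_of_irrefl P).has_min S hS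
  refine ⟨a, ha, fun c hc hca => ?_⟩
  rcases trichotomous_of P a c with h | rfl | h
  exacts [h, absurd rfl hca, absurd h (hmax c hc)]

theorem top.eq_of_weakly_better [IsStrictTotalOrder α P] (h : top P S a) (hx : x ∈ S)
    (hxa : x = a ∨ P x a) : x = a := by
  refine hxa.resolve_right fun hlt => ?_
  by_cases hx' : x = a
  · exact irrefl_of P a (hx' ▸ hlt)
  · exact asymm_of P hlt (h.2 x hx hx')

theorem top.eq_or_eq_of_weakly_better [IsStrictTotalOrder α P] (h : top P (S \ {a}) b)
    (hx : x ∈ S) (hxb : x = b ∨ P x b) : x = a ∨ x = b := by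
  by_cases hxa : x = a
  · exact Or.inl hxa
  · exact Or.inr (h.eq_of_weakly_better ⟨hx, hxa⟩ hxb)

theorem topTwo.exists_of_top {D : Set (α → α → Prop)} (htt : topTwo D) (hab : a ≠ b)
    {Pa Pb : α → α → Prop} (hPa : Pa ∈ D) (ha : top Pa S a) (hPb : Pb ∈ D) (hb : top Pb S b) :
    ∃ Q ∈ D, top Q S a ∧ top Q (S \ {a}) b :=
  htt S ⟨a, ha.1⟩ a b ha.1 hb.1 hab ⟨Pa, hPa, ha⟩ ⟨Pb, hPb, hb⟩

end Preferences

section Cycles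

variable {α : Type*}

theorem Function.exists_mem_periodicPts [Finite α] [Nonempty α] (f : α → α) :
    ∃ x, x ∈ periodicPts f := by
  obtain ⟨x₀⟩ := ‹Nonempty α›
  obtain ⟨i, j, hij, h⟩ := Finite.exists_ne_map_eq_of_infinite fun m : ℕ => f^[m] x₀
  wlog hlt : i < j generalizing i j
  · exact this j i hij.symm h.symm (by omega)
  refine ⟨f^[i] x₀, j - i, by omega, ?_⟩
  rw [IsPeriodicPt, IsFixedPt, ← iterate_add_apply, Nat.sub_add_cancel hlt.le]
  exact h.symm

theorem Function.exists_isCycle_of_mem_periodicPts [Fintype α] [DecidableEq α] {f : α → α}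
    {x : α} (hx : x ∈ periodicPts f) (hfx : f x ≠ x) :
    ∃ σ : Perm α, σ.IsCycle ∧ ∀ y ∈ σ.support, σ y = f y := by
  classical
  set ρ : Perm α := ofSubtype ((bijOn_periodicPts f).equiv f)
  have hρ : ∀ y ∈ periodicPts f, ρ y = f y := fun y hy => ofSubtype_apply_of_mem _ hy
  refine ⟨ρ.cycleOf x, ρ.isCycle_cycleOf (by rwa [hρ x hx]), fun y hy => ?_⟩
  have hyρ : y ∈ periodicPts f := by
    by_contra hy'
    exact Perm.mem_support.1 (support_cycleOf_le ρ x hy) (ofSubtype_apply_of_not_mem _ hy')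
  rw [(mem_support_cycleOf_iff.1 hy).1.cycleOf_apply, hρ y hyρ]

theorem Function.exists_fixed_or_isCycle [Fintype α] [Nonempty α] [DecidableEq α] (f : α → α) :
    (∃ x, f x = x) ∨ ∃ σ : Perm α, σ.IsCycle ∧ ∀ y ∈ σ.support, σ y = f y := by
  by_cases hfix : ∃ x, f x = x
  · exact Or.inl hfix
  · push Not at hfix
    obtain ⟨x, hx⟩ := exists_mem_periodicPts f
    exact Or.inr (exists_isCycle_of_mem_periodicPts hx (hfix x))

theorem Equiv.Perm.IsCycle.forall_eq_apply_of_eq_apply [Fintype α] [DecidableEq α]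
    {σ : Perm α} (hσ : σ.IsCycle) {g : α → α} (hg : Injective g)
    (h : ∀ c ∈ σ.support, g c = σ c ∨ g c = c) {d : α} (hd : d ∈ σ.support) (hgd : g d = σ d) :
    ∀ c ∈ σ.support, g c = σ c := by
  have step : ∀ c ∈ σ.support, g c = σ c → g (σ c) = σ (σ c) := fun c hc hgc =>
    (h (σ c) (apply_mem_support.2 hc)).resolve_right fun hgσc =>
      Perm.mem_support.1 hc (hg (hgσc.trans hgc.symm))
  intro c hc
  obtain ⟨i, rfl⟩ := hσ.exists_pow_eq (Perm.mem_support.1 hd) (Perm.mem_support.1 hc)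
  induction i with
  | zero => simpa using hgd
  | succ i ih =>
    rw [pow_succ', mul_apply]
    exact step _ (pow_apply_mem_support.2 hd) (ih (pow_apply_mem_support.2 hd))

theorem Equiv.Perm.IsCycle.exists_erase_apply [Fintype α] [DecidableEq α] {σ : Perm α}
    (hσ : σ.IsCycle) {c : α} (hc : c ∈ σ.support) (h : σ (σ c) ≠ c) :
    ∃ τ : Perm α, τ.IsCycle ∧ τ.support = σ.support.erase (σ c) ∧ τ c = σ (σ c) ∧
      ∀ d ∈ τ.support, d ≠ c → τ d = σ d := by
  have hσc : σ (σ (σ c)) ≠ σ c := fun h' => h (σ.injective h')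
  have hsupp := support_swap_mul_eq σ (σ c) hσc
  rw [sdiff_singleton_eq_erase] at hsupp
  refine ⟨swap (σ c) (σ (σ c)) * σ, hσ.swap_mul (Perm.mem_support.1 (apply_mem_support.2 hc)) hσc,
    hsupp, by simp, fun d hd hdc => ?_⟩
  rw [hsupp, mem_erase] at hd
  exact swap_apply_of_ne_of_ne (fun h' => hdc (σ.injective h')) fun h' => hd.1 (σ.injective h')

theorem Equiv.Perm.inv_apply_mem_support [Fintype α] [DecidableEq α] {σ : Perm α} {c : α}
    (hc : c ∈ σ.support) : σ⁻¹ c ∈ σ.support :=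
  support_inv σ ▸ apply_mem_support.2 ((support_inv σ).symm ▸ hc)

end Cycles

section Mechanism

variable {n : ℕ} {Ds : Fin n → Set (PrefRel n)}

def Profile.update (R : Profile n Ds) (i : Fin n) (q : PrefRel n)
    (hq : q ∈ Ds i) : Profile n Ds :=
  ⟨Function.update R.1 i q, fun j => by
    rcases eq_or_ne j i with rfl | h
    · simpa using hq
    · simpa [h] using R.2 j⟩

@[simp]
theorem Profile.update_apply_self (R : Profile n Ds) (i : Fin n)
    (q : PrefRel n) (hq : q ∈ Ds i) : (R.update i q hq).1 i = q := by
  simp [Profile.update]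

@[simp]
theorem Profile.update_apply_of_ne (R : Profile n Ds) {i j : Fin n}
    (q : PrefRel n) (hq : q ∈ Ds i) (h : j ≠ i) : (R.update i q hq).1 j = R.1 j := by
  simp [Profile.update, h]

def AssignsWithin (φ : Profile n Ds → Fin n → Fin n)
    (R : Profile n Ds) (C S : Finset (Fin n)) : Prop :=
  ∀ R' : Profile n Ds, (∀ v ∉ C, R'.1 v = R.1 v) → ∀ c ∈ C, φ R' c ∈ S

theorem AssignsWithin.mono {φ : Profile n Ds → Fin n → Fin n}
    {R R' : Profile n Ds} {C C' S : Finset (Fin n)} (h : AssignsWithin φ R C S) (hC : C' ⊆ C)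
    (hR : ∀ v ∉ C, R'.1 v = R.1 v) : AssignsWithin φ R' C' S := fun R'' hR'' =>
  fun c hc => h R'' (fun v hv => (hR'' v fun hv' => hv (hC hv')).trans (hR v hv)) c (hC hc)

theorem AssignsWithin.sdiff {φ : Profile n Ds → Fin n → Fin n}
    (hinj : ∀ R, Injective (φ R)) {R : Profile n Ds} {C S : Finset (Fin n)}
    (h : AssignsWithin φ R S S)
    (hC : ∀ R' : Profile n Ds, (∀ v ∉ S \ C, R'.1 v = R.1 v) → ∀ c ∈ C, φ R' c ∈ C) :
    AssignsWithin φ R (S \ C) (S \ C) := by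
  intro R' hR' c hc
  obtain ⟨hcS, hcC⟩ := Finset.mem_sdiff.1 hc
  refine Finset.mem_sdiff.2
    ⟨h R' (fun v hv => hR' v fun hv' => hv (Finset.mem_sdiff.1 hv').1) c hcS, fun hφc => hcC ?_⟩
  -- `φ R'` maps `C` injectively, hence onto, `C`
  obtain ⟨d, hd, hdc⟩ := Finset.surj_on_of_inj_on_of_card_le (fun d _ => φ R' d)
    (hC R' hR') (fun _ _ _ _ h => hinj R' h) le_rfl (φ R' c) hφc
  exact hinj R' hdc ▸ hd

variable {D : Set (PrefRel n)} {φ : Profile n (fun _ => D) → Fin n → Fin n}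

theorem IR.eq_or_eq_of_top_sdiff (hIR : IR φ) (hD : ∀ P ∈ D, IsStrictTotalOrder (Fin n) P)
    {R : Profile n (fun _ => D)} {S : Finset (Fin n)} {i a : Fin n}
    (htop : top (R.1 i) (↑S \ {a}) i) (hS : φ R i ∈ S) : φ R i = a ∨ φ R i = i :=
  haveI := hD _ (R.2 i)
  htop.eq_or_eq_of_weakly_better hS (hIR R i)

theorem SP.eq_of_top (hsp : SP φ) (hD : ∀ P ∈ D, IsStrictTotalOrder (Fin n) P)
    {R R' : Profile n (fun _ => D)} {S : Finset (Fin n)} {i a : Fin n}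
    (hR' : ∀ j, j ≠ i → R'.1 j = R.1 j) (htop : top (R.1 i) ↑S a) (hS : φ R i ∈ S)
    (ha : φ R' i = a) : φ R i = a :=
  haveI := hD _ (R.2 i)
  htop.eq_of_weakly_better hS (ha ▸ hsp R R' i hR')

end Mechanism

section TradingCycles

variable {n : ℕ} {D : Set (PrefRel n)} {φ : Profile n (fun _ => D) → Fin n → Fin n}

def ExecutesCycle (φ : Profile n (fun _ => D) → Fin n → Fin n) (S : Finset (Fin n))
    (σ : Perm (Fin n)) : Prop :=
  ∀ R : Profile n (fun _ => D), (∀ c ∈ σ.support, top (R.1 c) ↑S (σ c)) →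
    AssignsWithin φ R σ.support S → ∀ c ∈ σ.support, φ R c = σ c

theorem top_inv_apply {σ : Perm (Fin n)} {R : Fin n → PrefRel n} {S : Set (Fin n)} {c : Fin n}
    (htop : ∀ c ∈ σ.support, top (R c) S (σ c)) (hc : c ∈ σ.support) : top (R (σ⁻¹ c)) S c := by
  simpa using htop (σ⁻¹ c) (inv_apply_mem_support hc)

theorem apply_ne_self_of_apply_apply_eq (hD : ∀ P ∈ D, IsStrictTotalOrder (Fin n) P)
    (hbij : ∀ P, Bijective (φ P)) (hIR : IR φ) (hpe : PairEff φ)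
    {S : Finset (Fin n)} {σ : Perm (Fin n)}
    {R : Profile n (fun _ => D)} (htop : ∀ c ∈ σ.support, top (R.1 c) ↑S (σ c))
    (htop₂ : ∀ c ∈ σ.support, top (R.1 c) (↑S \ {σ c}) c) (hR : AssignsWithin φ R σ.support S)
    {c₀ : Fin n} (hc₀ : c₀ ∈ σ.support) (h2 : σ (σ c₀) = c₀) : φ R c₀ ≠ c₀ := by
  intro h₀
  set c₁ := σ c₀
  have hc₁ : c₁ ∈ σ.support := apply_mem_support.2 hc₀
  have hne : c₀ ≠ c₁ := (Perm.mem_support.1 hc₀).symm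
  have h₁ : φ R c₁ = c₁ :=
    (hIR.eq_or_eq_of_top_sdiff hD (htop₂ c₁ hc₁) (hR R (fun _ _ => rfl) c₁ hc₁)).resolve_left
      fun h => hne ((hbij R).1 (h₀.trans (h.trans h2).symm))
  have htop₁ : top (R.1 c₁) ↑S c₀ := h2 ▸ htop c₁ hc₁
  refine hpe R c₀ c₁ ⟨?_, ?_⟩
  · rw [h₀, h₁]
    exact (htop c₀ hc₀).2 c₀ htop₁.1 hne
  · rw [h₀, h₁]
    exact htop₁.2 c₁ (htop c₀ hc₀).1 hne.symm

theorem apply_update_eq_of_apply_apply_ne {S : Finset (Fin n)} {σ : Perm (Fin n)}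
    (hσ : σ.IsCycle)
    (ih : ∀ τ : Perm (Fin n), τ.IsCycle → #τ.support < #σ.support → ExecutesCycle φ S τ)
    {R : Profile n (fun _ => D)} (htop : ∀ c ∈ σ.support, top (R.1 c) ↑S (σ c))
    (hR : AssignsWithin φ R σ.support S) {c₀ : Fin n} (hc₀ : c₀ ∈ σ.support)
    (h3 : σ (σ c₀) ≠ c₀) {Y : PrefRel n} (hY : Y ∈ D) (hY₁ : top Y ↑S (σ (σ c₀))) :
    φ (R.update c₀ Y hY) c₀ = σ (σ c₀) := by
  -- reporting `Y`, agent `c₀` points along the cycle `σ` with `σ c₀` cut out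
  obtain ⟨τ, hτ, hτsupp, hτc₀, hτσ⟩ := hσ.exists_erase_apply hc₀ h3
  have hτσsupp : τ.support ⊆ σ.support := hτsupp ▸ Finset.erase_subset _ _
  have hc₀τ : c₀ ∈ τ.support := hτsupp ▸ Finset.mem_erase.2 ⟨(Perm.mem_support.1 hc₀).symm, hc₀⟩
  rw [← hτc₀]
  refine ih τ hτ (hτsupp ▸ Finset.card_erase_lt_of_mem (apply_mem_support.2 hc₀)) _
    (fun c hc => ?_) (hR.mono hτσsupp fun v hv => ?_) c₀ hc₀τ
  · by_cases hcc₀ : c = c₀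
    · subst hcc₀
      simpa [hτc₀] using hY₁
    · rw [hτσ c hc hcc₀, R.update_apply_of_ne _ _ hcc₀]
      exact htop c (hτσsupp hc)
  · exact R.update_apply_of_ne _ hY fun h => hv (h ▸ hc₀)

theorem apply_ne_self_of_apply_apply_ne (hD : ∀ P ∈ D, IsStrictTotalOrder (Fin n) P)
    (htt : topTwo D) (hbij : ∀ P, Bijective (φ P)) (hIR : IR φ) (hpe : PairEff φ) (hsp : SP φ)
    {S : Finset (Fin n)} {σ : Perm (Fin n)} (hσ : σ.IsCycle)
    (ih : ∀ τ : Perm (Fin n), τ.IsCycle → #τ.support < #σ.support → ExecutesCycle φ S τ)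
    {R : Profile n (fun _ => D)} (htop : ∀ c ∈ σ.support, top (R.1 c) ↑S (σ c))
    (htop₂ : ∀ c ∈ σ.support, top (R.1 c) (↑S \ {σ c}) c) (hR : AssignsWithin φ R σ.support S)
    {c₀ : Fin n} (hc₀ : c₀ ∈ σ.support) (h3 : σ (σ c₀) ≠ c₀) : φ R c₀ ≠ c₀ := by
  intro h₀
  set c₁ := σ c₀
  set c₂ := σ c₁
  have hc₁ : c₁ ∈ σ.support := apply_mem_support.2 hc₀
  have h10 : c₁ ≠ c₀ := Perm.mem_support.1 hc₀
  have h21 : c₂ ≠ c₁ := Perm.mem_support.1 hc₁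
  obtain ⟨X, hX, hX₁, hX₂⟩ :=
    htt.exists_of_top h21.symm (R.2 c₀) (htop c₀ hc₀) (R.2 c₁) (htop c₁ hc₁)
  obtain ⟨Y, hY, hY₁, -⟩ :=
    htt.exists_of_top h3 (R.2 c₁) (htop c₁ hc₁) (R.2 _) (top_inv_apply htop hc₀)
  have hMY := apply_update_eq_of_apply_apply_ne hσ ih htop hR hc₀ h3 hY hY₁
  set M := R.update c₀ X hX
  have hoff : ∀ v ∉ σ.support, M.1 v = R.1 v :=
    fun v hv => R.update_apply_of_ne _ hX fun h => hv (h ▸ hc₀)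
  have hMc₀ : φ M c₀ = c₂ := by
    have h12 : φ M c₀ = c₁ ∨ φ M c₀ = c₂ := by
      have := hD X hX
      refine hX₂.eq_or_eq_of_weakly_better (hR M hoff c₀ hc₀) ?_
      have := hsp M (R.update c₀ Y hY) c₀ fun j hj => by simp [M, hj]
      simpa [M, hMY] using this
    refine h12.resolve_left fun h => h10.symm ?_
    calc c₀ = φ R c₀ := h₀.symm
      _ = c₁ := hsp.eq_of_top hD (fun j hj => R.update_apply_of_ne X hX hj) (htop c₀ hc₀)
          (hR R (fun _ _ => rfl) c₀ hc₀) h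
  have hMc₁ : φ M c₁ = c₁ := by
    have htop₂' : top (M.1 c₁) (↑S \ {c₂}) c₁ := by
      rw [R.update_apply_of_ne X hX h10]
      exact htop₂ c₁ hc₁
    exact (hIR.eq_or_eq_of_top_sdiff hD htop₂' (hR M hoff c₁ hc₁)).resolve_left
      fun h => h10 ((hbij M).1 (h.trans hMc₀.symm))
  refine hpe M c₀ c₁ ⟨?_, ?_⟩
  · rw [hMc₀, hMc₁, R.update_apply_self]
    exact hX₁.2 c₂ (htop c₁ hc₁).1 h21
  · rw [hMc₀, hMc₁, R.update_apply_of_ne X hX h10]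
    exact (htop c₁ hc₁).2 c₁ (htop c₀ hc₀).1 h21.symm

theorem apply_eq_of_forall_top_sdiff (hD : ∀ P ∈ D, IsStrictTotalOrder (Fin n) P)
    (htt : topTwo D) (hbij : ∀ P, Bijective (φ P)) (hIR : IR φ) (hpe : PairEff φ) (hsp : SP φ)
    {S : Finset (Fin n)} {σ : Perm (Fin n)} (hσ : σ.IsCycle)
    (ih : ∀ τ : Perm (Fin n), τ.IsCycle → #τ.support < #σ.support → ExecutesCycle φ S τ)
    {R : Profile n (fun _ => D)} (htop : ∀ c ∈ σ.support, top (R.1 c) ↑S (σ c))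
    (htop₂ : ∀ c ∈ σ.support, top (R.1 c) (↑S \ {σ c}) c) (hR : AssignsWithin φ R σ.support S) :
    ∀ c ∈ σ.support, φ R c = σ c := by
  have hnext_or_own : ∀ c ∈ σ.support, φ R c = σ c ∨ φ R c = c := fun c hc =>
    hIR.eq_or_eq_of_top_sdiff hD (htop₂ c hc) (hR R (fun _ _ => rfl) c hc)
  obtain ⟨c₀, hc₀⟩ := hσ.nonempty_support
  refine hσ.forall_eq_apply_of_eq_apply (hbij R).1 hnext_or_own hc₀
    ((hnext_or_own c₀ hc₀).resolve_right ?_)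
  by_cases h2 : σ (σ c₀) = c₀
  · exact apply_ne_self_of_apply_apply_eq hD hbij hIR hpe htop htop₂ hR hc₀ h2
  · exact apply_ne_self_of_apply_apply_ne hD htt hbij hIR hpe hsp hσ ih htop htop₂ hR hc₀ h2

theorem executesCycle_of_lt (hD : ∀ P ∈ D, IsStrictTotalOrder (Fin n) P)
    (htt : topTwo D) (hbij : ∀ P, Bijective (φ P)) (hIR : IR φ) (hpe : PairEff φ) (hsp : SP φ)
    {S : Finset (Fin n)} {σ : Perm (Fin n)} (hσ : σ.IsCycle)
    (ih : ∀ τ : Perm (Fin n), τ.IsCycle → #τ.support < #σ.support → ExecutesCycle φ S τ) :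
    ExecutesCycle φ S σ := by
  intro R htop hR
  suffices h : ∀ N : Finset (Fin n), ∀ R : Profile n (fun _ => D),
      (∀ c ∈ σ.support, c ∉ N → top (R.1 c) (↑S \ {σ c}) c) →
      (∀ c ∈ σ.support, top (R.1 c) ↑S (σ c)) → AssignsWithin φ R σ.support S →
      ∀ c ∈ σ.support, φ R c = σ c from
    h σ.support R (fun c hc hc' => absurd hc hc') htop hR
  intro N
  induction N using Finset.strongInduction with
  | H N ihN =>
  intro R h₂ htop hR
  by_cases hall : ∀ c ∈ σ.support, top (R.1 c) (↑S \ {σ c}) c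
  · exact apply_eq_of_forall_top_sdiff hD htt hbij hIR hpe hsp hσ ih htop hall hR
  push Not at hall
  obtain ⟨s, hs, hs₂⟩ := hall
  -- by the top-two condition `c` may report `σ c` first and `c` second; it then gets `σ c`
  have hnext : ∀ c ∈ σ.support, ¬ top (R.1 c) (↑S \ {σ c}) c → φ R c = σ c := by
    intro c hc hc₂
    have hcN : c ∈ N := by_contra fun h => hc₂ (h₂ c hc h)
    obtain ⟨Q, hQ, hQ₁, hQ₂⟩ := htt.exists_of_top (Perm.mem_support.1 hc) (R.2 c) (htop c hc)
      (R.2 _) (top_inv_apply htop hc)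
    have hagree : ∀ j, j ≠ c → (R.update c Q hQ).1 j = R.1 j :=
      fun j hj => R.update_apply_of_ne Q hQ hj
    refine hsp.eq_of_top hD hagree (htop c hc) (hR R (fun _ _ => rfl) c hc) ?_
    refine ihN (N.erase c) (Finset.erase_ssubset hcN) _ (fun d hd hdN => ?_) (fun d hd => ?_)
      (hR.mono subset_rfl fun v hv => hagree v fun h => hv (h ▸ hc)) c hc
    · by_cases hdc : d = c
      · subst hdc
        simpa using hQ₂
      · rw [hagree d hdc]
        exact h₂ d hd fun h => hdN (Finset.mem_erase.2 ⟨hdc, h⟩)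
    · by_cases hdc : d = c
      · subst hdc
        simpa using hQ₁
      · rw [hagree d hdc]
        exact htop d hd
  refine hσ.forall_eq_apply_of_eq_apply (hbij R).1 (fun c hc => ?_) hs (hnext s hs hs₂)
  by_cases hc₂ : top (R.1 c) (↑S \ {σ c}) c
  · exact hIR.eq_or_eq_of_top_sdiff hD hc₂ (hR R (fun _ _ => rfl) c hc)
  · exact Or.inl (hnext c hc hc₂)

theorem executesCycle (hD : ∀ P ∈ D, IsStrictTotalOrder (Fin n) P)
    (htt : topTwo D) (hbij : ∀ P, Bijective (φ P)) (hIR : IR φ) (hpe : PairEff φ) (hsp : SP φ)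
    (S : Finset (Fin n)) {σ : Perm (Fin n)} (hσ : σ.IsCycle) : ExecutesCycle φ S σ := by
  induction h : #σ.support using Nat.strong_induction_on generalizing σ with
  | _ k ih =>
    exact executesCycle_of_lt hD htt hbij hIR hpe hsp hσ fun τ hτ hlt => ih _ (h ▸ hlt) hτ rfl

end TradingCycles

section Rounds

variable {n : ℕ} {D : Set (PrefRel n)} {φ : Profile n (fun _ => D) → Fin n → Fin n}

theorem exists_subset_trading_tops (hD : ∀ P ∈ D, IsStrictTotalOrder (Fin n) P)
    (htt : topTwo D) (hbij : ∀ P, Bijective (φ P)) (hIR : IR φ) (hpe : PairEff φ) (hsp : SP φ)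
    {P : Profile n (fun _ => D)} {S : Finset (Fin n)} (hS : S.Nonempty)
    (hP : AssignsWithin φ P S S) :
    ∃ C ⊆ S, C.Nonempty ∧ ∀ G : Profile n (fun _ => D), (∀ v ∉ S \ C, G.1 v = P.1 v) →
      ∀ c ∈ C, φ G c ∈ C ∧ top (P.1 c) ↑S (φ G c) := by
  choose f hf using fun v =>
    have := hD _ (P.2 v)
    exists_top (P := P.1 v) (Finset.coe_nonempty.2 hS)
  have : Nonempty (Fin n) := ⟨hS.choose⟩
  have hagree : ∀ {C : Finset (Fin n)} {G : Profile n (fun _ => D)},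
      (∀ v ∉ S \ C, G.1 v = P.1 v) → ∀ v ∉ S, G.1 v = P.1 v :=
    fun hG v hv => hG v fun h => hv (Finset.mem_sdiff.1 h).1
  rcases exists_fixed_or_isCycle f with ⟨x, hx⟩ | ⟨σ, hσ, hσf⟩
  · refine ⟨{x}, Finset.singleton_subset_iff.2 (hx ▸ (hf x).1), Finset.singleton_nonempty x,
      fun G hG c hc => ?_⟩
    rw [Finset.mem_singleton] at hc
    subst hc
    have hPc : top (P.1 c) ↑S c := by simpa only [hx] using hf c
    have htop : top (G.1 c) ↑S c := by rwa [hG c (by simp)]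
    have := hD _ (G.2 c)
    rw [htop.eq_of_weakly_better (hP G (hagree hG) c hPc.1) (hIR G c)]
    exact ⟨Finset.mem_singleton_self c, hPc⟩
  · have hσS : σ.support ⊆ S := fun c hc => by
      have h := (hf (σ⁻¹ c)).1
      rwa [← hσf _ (inv_apply_mem_support hc), ← Perm.mul_apply, mul_inv_cancel,
        Perm.one_apply] at h
    refine ⟨σ.support, hσS, hσ.nonempty_support, fun G hG c hc => ?_⟩
    have htop : ∀ c ∈ σ.support, top (G.1 c) ↑S (σ c) := fun c hc => by
      rw [hG c fun h => (Finset.mem_sdiff.1 h).2 hc, hσf c hc]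
      exact hf c
    rw [executesCycle hD htt hbij hIR hpe hsp S hσ G htop (hP.mono hσS (hagree hG)) c hc,
      hσf c hc]
    exact ⟨hσf c hc ▸ apply_mem_support.2 hc, hf c⟩

theorem exists_rounds_of_assignsWithin (hD : ∀ P ∈ D, IsStrictTotalOrder (Fin n) P)
    (htt : topTwo D) (hbij : ∀ P, Bijective (φ P)) (hIR : IR φ) (hpe : PairEff φ) (hsp : SP φ)
    (P : Profile n (fun _ => D)) (S : Finset (Fin n)) (hP : AssignsWithin φ P S S) :
    ∃ r : Fin n → ℕ, ∀ i ∈ S, r (φ P i) = r i ∧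
      ∀ o ∈ S, r i ≤ r o → o ≠ φ P i → P.1 i (φ P i) o := by
  induction S using Finset.strongInduction with
  | H S ih =>
  rcases S.eq_empty_or_nonempty with rfl | hS
  · exact ⟨0, by simp⟩
  obtain ⟨C, hCS, hC, hCtrade⟩ := exists_subset_trading_tops hD htt hbij hIR hpe hsp hS hP
  have hrest := hP.sdiff (fun R => (hbij R).1) fun G hG c hc => (hCtrade G hG c hc).1
  obtain ⟨r, hr⟩ := ih (S \ C) (Finset.sdiff_ssubset hCS hC) hrest
  refine ⟨fun i => if i ∈ C then 0 else r i + 1, fun i hi => ?_⟩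
  by_cases hiC : i ∈ C
  · obtain ⟨hφC, htop⟩ := hCtrade P (fun _ _ => rfl) i hiC
    exact ⟨by simp [hiC, hφC], fun o ho _ hne => htop.2 o ho hne⟩
  · have hiS : i ∈ S \ C := Finset.mem_sdiff.2 ⟨hi, hiC⟩
    have hφi : φ P i ∉ C := (Finset.mem_sdiff.1 (hrest P (fun _ _ => rfl) i hiS)).2
    refine ⟨by simp [hiC, hφi, (hr i hiS).1], fun o ho hle hne => ?_⟩
    by_cases hoC : o ∈ C
    · simp [hiC, hoC] at hle
    · simp only [hiC, hoC, if_false, add_le_add_iff_right] at hle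
      exact (hr i hiS).2 o (Finset.mem_sdiff.2 ⟨ho, hoC⟩) hle hne

end Rounds

theorem stmt12 {n : ℕ} (D : Set (PrefRel n)) (hD : ∀ P ∈ D, IsStrictTotalOrder (Fin n) P)
    (htt : topTwo D) (φ : Profile n (fun _ => D) → Fin n → Fin n)
    (hbij : ∀ P, Function.Bijective (φ P))
    (hIR : IR φ) (hpe : PairEff φ) (hsp : SP φ) :
    ∀ P : Profile n (fun _ => D), isTTC P.1 (φ P) := by
  intro P
  obtain ⟨r, hr⟩ := exists_rounds_of_assignsWithin hD htt hbij hIR hpe hsp P Finset.univ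
    fun _ _ _ _ => Finset.mem_univ _
  exact ⟨hbij P, r, fun i => ⟨(hr i (Finset.mem_univ i)).1,
    fun o => (hr i (Finset.mem_univ i)).2 o (Finset.mem_univ o)⟩⟩
end

section
/- Let S be a set of agents forming a trading cycle, with preferences P'_{i_s} ranking the next agent's endowment first and their own endowment second (i_s most prefers o_{i_{s+1}}, with o_{i_s} second, indices cyclic in S). If a mechanism φ on D^N is individually rational, pair efficient, and strategyproof on a domain satisfying the top-two condition, then at the profile (P'_S, P_{-S}) each agent i_s in S receives o_{i_{s+1}} (the cycle is executed), and in particular it is impossible that every agent in S receives their own endowment. -/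
def IsTopTwo {α : Type*} (R : α → α → Prop) (b c : α) : Prop :=
  top R Set.univ b ∧ top R (Set.univ \ {b}) c

namespace IsTopTwo

variable {α : Type*} {R : α → α → Prop} {b c : α}

theorem ne (h : IsTopTwo R b c) : c ≠ b :=
  h.2.1.2

theorem rel_first (h : IsTopTwo R b c) {x : α} (hx : x ≠ b) : R b x :=
  h.1.2 x trivial hx

theorem eq_first_of_rel [IsStrictOrder α R] (h : IsTopTwo R b c) {x : α} (hx : R x c) :
    x = b := by
  by_contra hxb
  have hxc : x ≠ c := by rintro rfl; exact irrefl x hx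
  exact asymm hx (h.2.2 x ⟨trivial, hxb⟩ hxc)

end IsTopTwo

theorem topTwo.exists_isTopTwo {α : Type*} {D : Set (α → α → Prop)} (htt : topTwo D)
    {b c : α} (hbc : b ≠ c) (hb : ∃ R ∈ D, top R Set.univ b) (hc : ∃ R ∈ D, top R Set.univ c) :
    ∃ R ∈ D, IsTopTwo R b c :=
  htt Set.univ ⟨b, trivial⟩ b c trivial trivial hbc hb hc

section CutOut

variable {α : Type*} [DecidableEq α] {S : Finset α} {σ : α → α} {a : α}

theorem Set.MapsTo.update_erase (hmaps : Set.MapsTo σ S S) (hσ : Set.InjOn σ S) (ha : a ∈ S)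
    (hcb : σ (σ a) ≠ σ a) :
    Set.MapsTo (Function.update σ a (σ (σ a))) (S.erase (σ a)) (S.erase (σ a)) := by
  intro x hx
  rw [Finset.mem_coe, Finset.mem_erase] at hx ⊢
  rcases eq_or_ne x a with rfl | hxa
  · rw [Function.update_self]
    exact ⟨hcb, hmaps (hmaps ha)⟩
  · rw [Function.update_of_ne hxa]
    exact ⟨fun h => hxa (hσ hx.2 ha h), hmaps hx.2⟩

theorem Set.InjOn.update_erase (hmaps : Set.MapsTo σ S S) (hσ : Set.InjOn σ S) (ha : a ∈ S) :
    Set.InjOn (Function.update σ a (σ (σ a))) (S.erase (σ a)) := by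
  intro x hx y hy hxy
  obtain ⟨hxb, hxS⟩ := Finset.mem_erase.1 hx
  obtain ⟨hyb, hyS⟩ := Finset.mem_erase.1 hy
  by_cases hxa : x = a <;> by_cases hya : y = a
  · rw [hxa, hya]
  · rw [hxa, Function.update_self, Function.update_of_ne hya] at hxy
    exact absurd (hσ (hmaps ha) hyS hxy).symm hyb
  · rw [hya, Function.update_self, Function.update_of_ne hxa] at hxy
    exact absurd (hσ hxS (hmaps ha) hxy) hxb
  · rw [Function.update_of_ne hxa, Function.update_of_ne hya] at hxy
    exact hσ hxS hyS hxy

end CutOut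

theorem Profile.exists_update {n : ℕ} {D : Set (PrefRel n)} (P : Profile n (fun _ => D))
    (a : Fin n) {R : PrefRel n} (hR : R ∈ D) :
    ∃ Q : Profile n (fun _ => D), Q.1 a = R ∧ ∀ x ≠ a, Q.1 x = P.1 x := by
  refine ⟨⟨Function.update P.1 a R, fun j => ?_⟩, Function.update_self .., fun x hx =>
    Function.update_of_ne hx ..⟩
  rcases eq_or_ne j a with rfl | h
  · rwa [Function.update_self]
  · rw [Function.update_of_ne h]; exact P.2 j

section Mechanism

variable {n : ℕ} {D : Set (PrefRel n)} {φ : Profile n (fun _ => D) → Fin n → Fin n}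
  {P : Profile n (fun _ => D)}

theorem IR.eq_self_or_eq_first (hD : ∀ R ∈ D, IsStrictTotalOrder (Fin n) R) (hIR : IR φ)
    {a b : Fin n} (h : IsTopTwo (P.1 a) b a) : φ P a = a ∨ φ P a = b :=
  have := hD _ (P.2 a)
  (hIR P a).imp_right h.eq_first_of_rel

theorem PairEff.apply_ne_self_of_two_cycle (hD : ∀ R ∈ D, IsStrictTotalOrder (Fin n) R)
    (hinj : ∀ P, Function.Injective (φ P)) (hIR : IR φ) (hpe : PairEff φ) {a b : Fin n}
    (ha : IsTopTwo (P.1 a) b a) (hb : IsTopTwo (P.1 b) a b) : φ P a ≠ a := by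
  intro hkeep
  have hb_keep : φ P b = b := (hIR.eq_self_or_eq_first hD hb).resolve_right fun h =>
    hb.ne (hinj P (h.trans hkeep.symm))
  refine hpe P a b ⟨?_, ?_⟩
  · rw [hkeep, hb_keep]; exact ha.rel_first ha.ne
  · rw [hkeep, hb_keep]; exact hb.rel_first hb.ne

theorem PairEff.apply_ne_self_of_shortcut (hD : ∀ R ∈ D, IsStrictTotalOrder (Fin n) R)
    (htt : topTwo D) (hinj : ∀ P, Function.Injective (φ P)) (hIR : IR φ) (hpe : PairEff φ)
    (hsp : SP φ) {a b c : Fin n} (ha : IsTopTwo (P.1 a) b a) (hb : IsTopTwo (P.1 b) c b)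
    (hca : c ≠ a) (ha_top : ∃ R ∈ D, top R Set.univ a)
    (hshort : ∀ Q : Profile n (fun _ => D), IsTopTwo (Q.1 a) c a →
      (∀ x ≠ a, Q.1 x = P.1 x) → φ Q a = c) :
    φ P a ≠ a := by
  intro hkeep
  obtain ⟨Wa, hWaD, hWa⟩ := htt.exists_isTopTwo hb.ne ⟨_, P.2 a, ha.1⟩ ⟨_, P.2 b, hb.1⟩
  obtain ⟨Qa, hQaD, hQa⟩ := htt.exists_isTopTwo hca ⟨_, P.2 b, hb.1⟩ ha_top
  obtain ⟨W, hW_a, hW_other⟩ := P.exists_update a hWaD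
  obtain ⟨Q, hQ_a, hQ_other⟩ := W.exists_update a hQaD
  have hQ : φ Q a = c := hshort Q (hQ_a ▸ hQa) fun x hx => (hQ_other x hx).trans (hW_other x hx)
  have hW_a_cb : φ W a = c ∨ φ W a = b := by
    have := hD Wa hWaD
    rcases hsp W Q a hQ_other with h | h
    · exact .inl (h.trans hQ)
    · rw [hQ, hW_a] at h
      exact .inr (hWa.eq_first_of_rel h)
  have hW_a_c : φ W a = c := hW_a_cb.resolve_right fun hWb => by
    have := hD _ (P.2 a)
    rcases hsp P W a hW_other with h | h
    · exact ha.ne (hkeep.symm.trans (h.trans hWb))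
    · rw [hkeep, hWb] at h
      exact asymm h (ha.rel_first ha.ne)
  have hW_b : φ W b = b := by
    have hb' : IsTopTwo (W.1 b) c b := by rwa [hW_other b ha.ne.symm]
    exact (hIR.eq_self_or_eq_first hD hb').resolve_right fun h =>
      ha.ne (hinj W (h.trans hW_a_c.symm)).symm
  refine hpe W a b ⟨?_, ?_⟩
  · rw [hW_a_c, hW_b, hW_a]; exact hWa.rel_first hb.ne.symm
  · rw [hW_a_c, hW_b, hW_other b ha.ne.symm]; exact hb.rel_first hb.ne

theorem PairEff.apply_eq_of_isTopTwo_cycle (hD : ∀ R ∈ D, IsStrictTotalOrder (Fin n) R)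
    (htt : topTwo D) (hinj : ∀ P, Function.Injective (φ P)) (hIR : IR φ) (hpe : PairEff φ)
    (hsp : SP φ) (S : Finset (Fin n)) (σ : Fin n → Fin n) (hmaps : Set.MapsTo σ S S)
    (hσ : Set.InjOn σ S) (P : Profile n (fun _ => D))
    (hP : ∀ a ∈ S, IsTopTwo (P.1 a) (σ a) a) :
    ∀ a ∈ S, φ P a = σ a := by
  induction hk : S.card generalizing S σ P with
  | zero => simp_all
  | succ k ih =>
  intro a ha
  refine (hIR.eq_self_or_eq_first hD (hP a ha)).resolve_left ?_
  have hb : σ a ∈ S := hmaps ha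
  by_cases hca : σ (σ a) = a
  · have hb_top := hP _ hb
    rw [hca] at hb_top
    exact hpe.apply_ne_self_of_two_cycle hD hinj hIR (hP a ha) hb_top
  -- `σ` is onto `S`, so `a` is some agent's top choice.
  obtain ⟨z, hz, hza⟩ := Finset.surjOn_of_injOn_of_card_le σ hmaps hσ le_rfl ha
  refine hpe.apply_ne_self_of_shortcut hD htt hinj hIR hsp (hP a ha) (hP _ hb) hca
    ⟨_, P.2 z, hza ▸ (hP z hz).1⟩ fun Q hQa hQ_other => ?_
  have hcut := ih (S.erase (σ a)) (Function.update σ a (σ (σ a)))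
    (hmaps.update_erase hσ ha (hP _ hb).ne.symm) (hσ.update_erase hmaps ha) Q
    (fun x hx => by
      rcases eq_or_ne x a with rfl | hxa
      · rwa [Function.update_self]
      · rw [Function.update_of_ne hxa, hQ_other x hxa]
        exact hP x (Finset.mem_of_mem_erase hx))
    (by rw [Finset.card_erase_of_mem hb, hk, Nat.add_sub_cancel])
    a (Finset.mem_erase.2 ⟨(hP a ha).ne, ha⟩)
  rwa [Function.update_self] at hcut

end Mechanism

/-- if agents i_1, ..., i_m form a trading cycle and each i_s reports
the preference P'_{i_s} ranking o_{i_{s+1}} first and o_{i_s} second, then any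
individually rational, pair efficient, strategyproof mechanism on a top-two domain
executes the cycle; in particular not every agent in the cycle keeps their endowment. -/
theorem stmt13 {n m : ℕ} [NeZero m] (D : Set (PrefRel n))
    (hD : ∀ P ∈ D, IsStrictTotalOrder (Fin n) P) (htt : topTwo D)
    (φ : Profile n (fun _ => D) → Fin n → Fin n)
    (hbij : ∀ P, Function.Bijective (φ P))
    (hIR : IR φ) (hpe : PairEff φ) (hsp : SP φ)
    (i : Fin m → Fin n) (hi : Function.Injective i)
    (P : Profile n (fun _ => D))
    (hP : ∀ s : Fin m, top (P.1 (i s)) Set.univ (i (s + 1)) ∧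
      top (P.1 (i s)) (Set.univ \ {i (s + 1)}) (i s)) :
    (∀ s : Fin m, φ P (i s) = i (s + 1)) ∧ ¬ (∀ s : Fin m, φ P (i s) = i s) := by
  set σ := Function.extend i (fun s => i (s + 1)) id
  have hσ : ∀ s, σ (i s) = i (s + 1) := hi.extend_apply _ _
  have hcycle := hpe.apply_eq_of_isTopTwo_cycle hD htt (fun P => (hbij P).1) hIR hsp
    (Finset.univ.image i) σ
    (by simp only [Finset.coe_image, Finset.coe_univ, Set.image_univ]
        rintro _ ⟨s, rfl⟩; rw [hσ]; exact ⟨_, rfl⟩)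
    (by simp only [Finset.coe_image, Finset.coe_univ, Set.image_univ]
        rintro _ ⟨s, rfl⟩ _ ⟨t, rfl⟩ h; rw [hσ, hσ] at h; rw [add_right_cancel (hi h)])
    P (Finset.forall_mem_image.2 fun s _ => (hσ s).symm ▸ hP s)
  have hexec : ∀ s, φ P (i s) = i (s + 1) := fun s =>
    (hcycle _ (Finset.mem_image_of_mem i (Finset.mem_univ s))).trans (hσ s)
  exact ⟨hexec, fun hkeep => (hP 0).2.1.2 ((hkeep 0).symm.trans (hexec 0))⟩
end

section
/- There exists a domain profile violating domain-wise sufficiency of the top-two condition: for n = 3 with heterogeneous domains D_1 = {o2≻o1≻o3}, D_2 = {o3≻o2≻o1}, D_3 = {o1≻o3≻o2} (each a singleton, hence each trivially satisfying the top-two condition), the mechanism that always returns the endowment allocation (agent i gets o_i) is individually rational, pair efficient, and strategyproof, yet differs from TTC at the unique preference profile. -/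
/-- The preference encoded by a rank vector: lower rank = more preferred. -/
def prefOf {n : ℕ} (rk : Fin n → ℕ) : PrefRel n := fun a b => rk a < rk b

/-- Heterogeneous domains: D_1 = {o2 o1 o3}, D_2 = {o3 o2 o1}, D_3 = {o1 o3 o2},
with objects o1 = 0, o2 = 1, o3 = 2. -/
def Ds14 : Fin 3 → Set (PrefRel 3) := ![{prefOf ![1,0,2]}, {prefOf ![2,1,0]}, {prefOf ![0,2,1]}]

/-- The endowment mechanism: every agent keeps their own object. -/
def endowMech : Profile 3 Ds14 → Fin 3 → Fin 3 := fun _ i => i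

/-! A singleton domain satisfies the top-two condition vacuously: two distinct tops of the same
set would force its single preference to rank each above the other. In a TTC allocation, an object
an agent prefers to its assignment must leave in a strictly earlier round; at the unique profile
every agent prefers the next agent's endowment, so keeping the endowments would need rounds that
strictly decrease around the cycle `0 → 1 → 2 → 0`. -/

theorem topTwo_singleton {α : Type*} {P : α → α → Prop} (hP : ∀ a b, P a b → ¬ P b a) :
    topTwo {P} := by
  rintro O' - a b ha hb hab ⟨P₁, rfl, -, htop₁⟩ ⟨P₂, rfl, -, htop₂⟩
  exact absurd (htop₂ a ha hab) (hP a b (htop₁ b hb hab.symm))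

theorem prefOf_asymm {n : ℕ} (rk : Fin n → ℕ) (a b : Fin n) : prefOf rk a b → ¬ prefOf rk b a :=
  lt_asymm

theorem exists_round_lt_of_isTTC {n : ℕ} {Pr : Fin n → PrefRel n} {x : Fin n → Fin n}
    (hasymm : ∀ i a b, Pr i a b → ¬ Pr i b a) (h : isTTC Pr x) :
    ∃ r : Fin n → ℕ, ∀ i o, Pr i o (x i) → r o < r i := by
  obtain ⟨-, r, hr⟩ := h
  refine ⟨r, fun i o hpref => lt_of_not_ge fun hle => ?_⟩
  have hne : o ≠ x i := by
    rintro rfl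
    exact hasymm i _ _ hpref hpref
  exact hasymm i o (x i) hpref ((hr i).2 o hle hne)

def pref14 : Fin 3 → PrefRel 3 := ![prefOf ![1,0,2], prefOf ![2,1,0], prefOf ![0,2,1]]

theorem pref14_asymm (i : Fin 3) (a b : Fin 3) : pref14 i a b → ¬ pref14 i b a := by
  fin_cases i <;> exact prefOf_asymm _ a b

theorem Ds14_eq (i : Fin 3) : Ds14 i = {pref14 i} := by
  fin_cases i <;> rfl

theorem Profile.val_eq_pref14 (P : Profile 3 Ds14) : P.1 = pref14 :=
  funext fun i => by simpa [Ds14_eq] using P.2 i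

def profile14 : Profile 3 Ds14 := ⟨pref14, fun i => by rw [Ds14_eq]; rfl⟩

theorem pairEff_endowMech : PairEff endowMech := by
  intro P i j
  simp only [endowMech, P.val_eq_pref14]
  fin_cases i <;> fin_cases j <;> simp [pref14, prefOf]

theorem not_isTTC_id_pref14 : ¬ isTTC pref14 id := by
  intro h
  obtain ⟨r, hr⟩ := exists_round_lt_of_isTTC pref14_asymm h
  have h₀ := hr 0 1 (by simp [pref14, prefOf])
  have h₁ := hr 1 2 (by simp [pref14, prefOf])
  have h₂ := hr 2 0 (by simp [pref14, prefOf])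
  omega

theorem stmt14 :
    (∀ i, topTwo (Ds14 i)) ∧
    (∀ P, Function.Bijective (endowMech P)) ∧
    IR endowMech ∧ PairEff endowMech ∧ SP endowMech ∧
    ∃ P : Profile 3 Ds14, ¬ isTTC P.1 (endowMech P) := by
  refine ⟨fun i => ?_, fun _ => Function.bijective_id, fun _ _ => Or.inl rfl, pairEff_endowMech,
    fun _ _ _ _ => Or.inl rfl, profile14, not_isTTC_id_pref14⟩
  rw [Ds14_eq]
  exact topTwo_singleton (pref14_asymm i)
end

section
/- Suppose the domain D fails the top-two condition for some O' ⊆ O with |O'| ≤ 4, and for every o ∈ O \ O' there is a preference in D whose most-preferred object within O' ∪ {o} is o. Then there exists a non-TTC mechanism on D^N that is individually rational, Pareto efficient (hence pair efficient), and strategyproof. -/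
/-- `D` fails the top-two condition for `O'`. -/
def failsTopTwoFor {α : Type*} (D : Set (α → α → Prop)) (O' : Set α) : Prop :=
  ∃ a b : α, a ∈ O' ∧ b ∈ O' ∧ a ≠ b ∧
    (∃ P ∈ D, top P O' a) ∧ (∃ P ∈ D, top P O' b) ∧
    ∀ P ∈ D, top P O' a → ¬ top P (O' \ {a}) b

/-!
Let `S = O'`. Since the top-two condition fails for `S`, there are `a ≠ b` in `S`, each ranked
first in `S` by some preference in `D`, such that no preference in `D` ranks `a` first and `b`
second in `S`. On `S` we run top trading cycles, except when `a` and `b` rank each other first and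
the other agents of `S` (at most two) have no pointer cycle among themselves in `S \ {b}`: then `a`
gets `b`, `b` gets its favourite `x` in `S \ {a}`, `x` gets its favourite `y` in `S \ {b}`, and
`y` gets `a`. Both rules produce serial dictatorship outcomes, which are Pareto efficient. Given the
others' reports, each agent of `S` gets its favourite object in a menu that its own report does not
affect, hence strategyproofness; for `b` this uses that `b` never ranks its own object right after
`a`. Outsiders are served by top trading cycles on the whole market, which keeps them out of `S`
as long as each ranks its own object above `S`, and otherwise top trading cycles runs everywhere.
At a profile where `a` ranks `b` first, the rest of `S` ranks `a` first and the outsiders rank their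
own objects above `S`, `a` gets `b` but `b` does not get `a`, which top trading cycles never does.
-/

open Function Finset Relation

noncomputable section

namespace HousingMarket

variable {α : Type*}

section Best

variable {P Q : α → α → Prop} [IsStrictTotalOrder α P] {X Y : Finset α} {m j : α}

theorem exists_best (hX : X.Nonempty) : ∃ m ∈ X, ∀ j ∈ X, j ≠ m → P m j := by
  classical
  let _ := linearOrderOfSTO P
  exact ⟨X.min' hX, X.min'_mem hX, fun j hj hne => (X.min'_le j hj).resolve_left hne.symm⟩

theorem eq_or_rel_trans {u v w : α} (h₁ : u = v ∨ P u v) (h₂ : v = w ∨ P v w) :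
    u = w ∨ P u w := by
  rcases h₁ with rfl | h₁ <;> rcases h₂ with rfl | h₂
  exacts [Or.inl rfl, Or.inr h₂, Or.inr h₁, Or.inr (_root_.trans h₁ h₂)]

variable [Nonempty α]

variable (P) in
/-- A junk value when `X` is empty. -/
def best (X : Finset α) : α :=
  Classical.epsilon fun m => m ∈ X ∧ ∀ j ∈ X, j ≠ m → P m j

theorem best_mem (hX : X.Nonempty) : best P X ∈ X :=
  (Classical.epsilon_spec (exists_best (P := P) hX)).1

theorem best_rel (hj : j ∈ X) (hne : j ≠ best P X) : P (best P X) j :=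
  (Classical.epsilon_spec (exists_best (P := P) ⟨j, hj⟩)).2 j hj hne

theorem best_eq_of_forall (hm : m ∈ X) (h : ∀ j ∈ X, j ≠ m → P m j) : best P X = m := by
  by_contra hne
  exact asymm (best_rel hm (Ne.symm hne)) (h _ (best_mem ⟨m, hm⟩) hne)

theorem best_singleton : best P {m} = m :=
  best_eq_of_forall (mem_singleton_self m) fun _ hj hne => absurd (mem_singleton.1 hj) hne

theorem best_of_subset (hYX : Y ⊆ X) (h : best P X ∈ Y) : best P Y = best P X :=
  best_eq_of_forall h fun _ hj hne => best_rel (hYX hj) hne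

theorem best_eq_or_rel [IsStrictTotalOrder α Q] (hX : X.Nonempty) :
    best P X = best Q X ∨ P (best P X) (best Q X) :=
  (eq_or_ne (best Q X) (best P X)).imp Eq.symm (best_rel (best_mem hX))

end Best

section Reach

variable {f g : α → α} {i o : α}

theorem reflTransGen_iterate (f : α → α) (o : α) (m : ℕ) :
    ReflTransGen (fun u v => f u = v) o (f^[m] o) := by
  induction m with
  | zero => exact ReflTransGen.refl
  | succ m ih => exact ih.tail (iterate_succ_apply' f m o).symm

theorem exists_iterate_eq_of_reflTransGen (h : ReflTransGen (fun u v => f u = v) o i) :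
    ∃ m, f^[m] o = i := by
  induction h with
  | refl => exact ⟨0, rfl⟩
  | tail _ huv ih =>
    obtain ⟨m, hm⟩ := ih
    exact ⟨m + 1, by rw [iterate_succ_apply', hm, huv]⟩

theorem mem_periodicPts_of_reflTransGen (h : ReflTransGen (fun u v => f u = v) (f i) i) :
    i ∈ periodicPts f := by
  obtain ⟨m, hm⟩ := exists_iterate_eq_of_reflTransGen h
  exact mk_mem_periodicPts m.succ_pos (by rw [IsPeriodicPt, IsFixedPt, iterate_succ_apply, hm])

theorem reflTransGen_of_mem_periodicPts (h : i ∈ periodicPts f) :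
    ReflTransGen (fun u v => f u = v) (f i) i := by
  obtain ⟨k, hk, hki⟩ := mem_periodicPts.1 h
  obtain ⟨m, rfl⟩ := Nat.exists_eq_succ_of_ne_zero hk.ne'
  simpa [← iterate_succ_apply, hki.eq] using reflTransGen_iterate f (f i) m

theorem reflTransGen_of_eqOn_compl (hfg : ∀ u, u ≠ i → f u = g u)
    (h : ReflTransGen (fun u v => g u = v) o i) : ReflTransGen (fun u v => f u = v) o i := by
  induction h using ReflTransGen.head_induction_on with
  | refl => exact ReflTransGen.refl
  | @head u _ hgo _ ih =>
    by_cases hu : u = i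
    · exact hu ▸ ReflTransGen.refl
    · exact ih.head ((hfg u hu).trans hgo)

theorem periodicPts_subset_of_eqOn_compl (hfg : ∀ u, u ≠ i → f u = g u)
    (hi : i ∉ periodicPts f) : periodicPts f ⊆ periodicPts g := by
  intro j hj
  obtain ⟨k, hk, hkj⟩ := mem_periodicPts.1 hj
  have horbit : ∀ m, g^[m] j = f^[m] j := by
    intro m
    induction m with
    | zero => rfl
    | succ m ih =>
      rw [iterate_succ_apply', iterate_succ_apply', ih]
      refine (hfg _ fun h => hi ?_).symm
      exact h ▸ mk_mem_periodicPts hk (hkj.apply_iterate m)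
  exact mk_mem_periodicPts hk (by rw [IsPeriodicPt, IsFixedPt, horbit, hkj.eq])

end Reach

theorem eq_or_eq_of_card_le_two [DecidableEq α] {s : Finset α} (hs : s.card ≤ 2) {j k l : α}
    (hj : j ∈ s) (hk : k ∈ s) (hl : l ∈ s) (hjk : j ≠ k) : l = j ∨ l = k := by
  by_contra h
  simp only [not_or] at h
  have hsub : {l, j, k} ⊆ s := by
    intro u hu
    simp only [mem_insert, mem_singleton] at hu
    rcases hu with rfl | rfl | rfl <;> assumption
  have := card_le_card hsub
  rw [card_insert_of_notMem (by simp [h.1, h.2]), card_pair hjk] at this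
  omega

theorem mem_sdiff_pair [DecidableEq α] {S : Finset α} {a b j : α} :
    j ∈ S \ {a, b} ↔ j ∈ S ∧ j ≠ a ∧ j ≠ b := by
  simp [and_comm]

theorem mem_erase_of_mem_sdiff_pair [DecidableEq α] {S : Finset α} {a b j : α}
    (hj : j ∈ S \ {a, b}) : j ∈ S.erase b :=
  mem_erase.2 ⟨(mem_sdiff_pair.1 hj).2.2, (mem_sdiff_pair.1 hj).1⟩

section Efficiency

variable (Pr : α → α → α → Prop)

/-- `x` is a serial dictatorship outcome for the priority `r`, ties allowed. -/
def IsPriorityAlloc (X : Finset α) (x : α → α) (r : α → ℕ) : Prop :=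
  ∀ i ∈ X, ∀ o ∈ X, o ≠ x i → (∀ j ∈ X, r j < r i → x j ≠ o) → Pr i (x i) o

def IsParetoOn (X : Finset α) (x : α → α) : Prop :=
  ∀ y : α → α, Set.MapsTo y X X → Set.InjOn y X → (∀ i ∈ X, y i = x i ∨ Pr i (y i) (x i)) →
    Set.EqOn y x X

variable {Pr} [∀ i, IsStrictTotalOrder α (Pr i)] {X : Finset α} {x : α → α} {r : α → ℕ}

theorem IsPriorityAlloc.isParetoOn (h : IsPriorityAlloc Pr X x r) : IsParetoOn Pr X x := by
  intro y hyX hy hdom i hi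
  induction hr : r i using Nat.strong_induction_on generalizing i with
  | _ n ih =>
    refine (hdom i hi).resolve_right fun hlt => asymm hlt (h i hi (y i) (hyX hi) ?_ ?_)
    · intro he
      rw [he] at hlt
      exact irrefl _ hlt
    · intro j hj hji hxj
      obtain rfl := hy hj hi ((ih (r j) (hr ▸ hji) hj rfl).trans hxj)
      exact lt_irrefl _ hji

end Efficiency

section TTC

variable [Nonempty α] (Pr : α → α → α → Prop)

def ptr (X : Finset α) (i : α) : α := best (Pr i) X

open Classical in
/-- The agents trading in the first round of top trading cycles on `X`. -/
def core (X : Finset α) : Finset α := X.filter (· ∈ periodicPts (ptr Pr X))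

variable {Pr} {X Y : Finset α} {a b i j k o : α}

theorem mem_core : i ∈ core Pr X ↔ i ∈ X ∧ i ∈ periodicPts (ptr Pr X) := by
  simp [core]

theorem core_subset : core Pr X ⊆ X := fun _ h => (mem_core.1 h).1

section StrictTotalOrder

variable [∀ i, IsStrictTotalOrder α (Pr i)]

theorem ptr_mem (hX : X.Nonempty) : ptr Pr X i ∈ X := best_mem hX

theorem ptr_rel (hj : j ∈ X) (hne : j ≠ ptr Pr X i) : Pr i (ptr Pr X i) j := best_rel hj hne

theorem periodicPts_ptr_subset (hX : X.Nonempty) : periodicPts (ptr Pr X) ⊆ X := by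
  intro x hx
  obtain ⟨k, hk, hkx⟩ := mem_periodicPts.1 hx
  obtain ⟨m, rfl⟩ := Nat.exists_eq_succ_of_ne_zero hk.ne'
  rw [← hkx.eq, iterate_succ_apply']
  exact ptr_mem hX

theorem mem_core_iff (hX : X.Nonempty) : i ∈ core Pr X ↔ i ∈ periodicPts (ptr Pr X) :=
  mem_core.trans ⟨And.right, fun h => ⟨periodicPts_ptr_subset hX h, h⟩⟩

theorem core_nonempty (hX : X.Nonempty) : (core Pr X).Nonempty := by
  obtain ⟨x, hx⟩ := hX
  set f := ptr Pr X
  have hmaps (k : ℕ) : f^[k + 1] x ∈ X := by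
    rw [iterate_succ_apply']
    exact ptr_mem ⟨x, hx⟩
  obtain ⟨m, k, hmk, heq⟩ :=
    Finite.exists_ne_map_eq_of_infinite fun k : ℕ => (⟨f^[k + 1] x, hmaps k⟩ : X)
  wlog hlt : m < k generalizing m k
  · exact this k m hmk.symm heq.symm (lt_of_le_of_ne (not_lt.1 hlt) hmk.symm)
  refine ⟨f^[m + 1] x, mem_core.2 ⟨hmaps m, mk_mem_periodicPts (Nat.sub_pos_of_lt hlt) ?_⟩⟩
  rw [IsPeriodicPt, IsFixedPt, ← iterate_add_apply, show k - m + (m + 1) = k + 1 by omega]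
  exact (congrArg Subtype.val heq).symm

theorem ptr_mem_core (h : i ∈ core Pr X) : ptr Pr X i ∈ core Pr X := by
  have hX : X.Nonempty := ⟨i, core_subset h⟩
  rw [mem_core_iff hX] at h ⊢
  exact (bijOn_periodicPts _).mapsTo h

theorem exists_ptr_eq_of_mem_core (h : o ∈ core Pr X) : ∃ j ∈ core Pr X, ptr Pr X j = o := by
  have hX : X.Nonempty := ⟨o, core_subset h⟩
  simp_rw [mem_core_iff hX] at h ⊢
  exact (bijOn_periodicPts _).surjOn h

end StrictTotalOrder

variable [DecidableEq α]

variable (Pr) in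
def ttc (X : Finset α) : α → α :=
  if _h : (core Pr X).Nonempty then
    fun i => if i ∈ core Pr X then ptr Pr X i else ttc (X \ core Pr X) i
  else id
termination_by X.card
decreasing_by exact card_lt_card (sdiff_ssubset core_subset _h)

theorem ttc_of_mem_core (h : i ∈ core Pr X) : ttc Pr X i = ptr Pr X i := by
  rw [ttc, dif_pos ⟨i, h⟩, if_pos h]

theorem ttc_of_notMem_core (h : i ∉ core Pr X) : ttc Pr X i = ttc Pr (X \ core Pr X) i := by
  by_cases hC : (core Pr X).Nonempty
  · rw [ttc, dif_pos hC, if_neg h]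
  · rw [not_nonempty_iff_eq_empty.1 hC, sdiff_empty]

theorem ttc_of_notMem (hi : i ∉ X) : ttc Pr X i = i := by
  induction X using Finset.strongInduction with
  | H X ih =>
    by_cases hC : (core Pr X).Nonempty
    · rw [ttc_of_notMem_core fun h => hi (core_subset h)]
      exact ih _ (sdiff_ssubset core_subset hC) fun h => hi (sdiff_subset h)
    · rw [ttc, dif_neg hC, id]

theorem ttc_eq_ptr_of_reflTransGen (hi : i ∈ X)
    (h : ReflTransGen (fun u v => ptr Pr X u = v) (ptr Pr X i) i) : ttc Pr X i = ptr Pr X i :=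
  ttc_of_mem_core (mem_core.2 ⟨hi, mem_periodicPts_of_reflTransGen h⟩)

theorem ttc_eq_of_swap (ha : a ∈ X) (hab : ptr Pr X a = b)
    (hba : ptr Pr X b = a) : ttc Pr X a = b :=
  hab ▸ ttc_eq_ptr_of_reflTransGen ha (hab ▸ ReflTransGen.single hba)

variable [∀ i, IsStrictTotalOrder α (Pr i)]

theorem sdiff_core_ssubset (hX : X.Nonempty) : X \ core Pr X ⊂ X :=
  sdiff_ssubset core_subset (core_nonempty hX)

theorem core_induction {motive : Finset α → Prop} (X : Finset α)
    (step : ∀ X, (X.Nonempty → motive (X \ core Pr X)) → motive X) : motive X :=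
  X.strongInduction fun X ih => step X fun hX => ih _ (sdiff_core_ssubset hX)

theorem ttc_mem (hi : i ∈ X) : ttc Pr X i ∈ X := by
  induction X using core_induction (Pr := Pr) generalizing i with
  | step X ih =>
    by_cases hc : i ∈ core Pr X
    · rw [ttc_of_mem_core hc]
      exact ptr_mem ⟨i, hi⟩
    · rw [ttc_of_notMem_core hc]
      exact sdiff_subset (ih ⟨i, hi⟩ (mem_sdiff.2 ⟨hi, hc⟩))

theorem ttc_mem_core_iff (hi : i ∈ X) : ttc Pr X i ∈ core Pr X ↔ i ∈ core Pr X := by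
  refine ⟨fun h => by_contra fun hc => ?_, fun hc => ttc_of_mem_core hc ▸ ptr_mem_core hc⟩
  rw [ttc_of_notMem_core hc] at h
  exact (mem_sdiff.1 (ttc_mem (mem_sdiff.2 ⟨hi, hc⟩))).2 h

theorem ttc_injOn : Set.InjOn (ttc Pr X) X := by
  induction X using core_induction (Pr := Pr) with
  | step X ih =>
    intro i hi j hj h
    have hiff := (ttc_mem_core_iff (Pr := Pr) hi).symm.trans (h ▸ ttc_mem_core_iff hj)
    by_cases hc : i ∈ core Pr X
    · rw [ttc_of_mem_core hc, ttc_of_mem_core (hiff.1 hc)] at h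
      exact (bijOn_periodicPts _).injOn ((mem_core_iff ⟨i, hi⟩).1 hc)
        ((mem_core_iff ⟨i, hi⟩).1 (hiff.1 hc)) h
    · rw [ttc_of_notMem_core hc, ttc_of_notMem_core (hiff.not.1 hc)] at h
      exact ih ⟨i, hi⟩ (mem_sdiff.2 ⟨hi, hc⟩) (mem_sdiff.2 ⟨hj, hiff.not.1 hc⟩) h

theorem ttc_injective : Injective (ttc Pr X) := by
  intro i j h
  by_cases hi : i ∈ X <;> by_cases hj : j ∈ X
  · exact ttc_injOn hi hj h
  · rw [ttc_of_notMem hj] at h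
    exact absurd (h ▸ ttc_mem hi) hj
  · rw [ttc_of_notMem hi] at h
    exact absurd (h ▸ ttc_mem hj) hi
  · rwa [ttc_of_notMem hi, ttc_of_notMem hj] at h

theorem exists_ttc_eq_best (hi : i ∈ X) : ∃ Y ⊆ X, i ∈ Y ∧ ttc Pr X i = best (Pr i) Y := by
  induction X using core_induction (Pr := Pr) generalizing i with
  | step X ih =>
    by_cases hc : i ∈ core Pr X
    · exact ⟨X, subset_rfl, hi, ttc_of_mem_core hc⟩
    · obtain ⟨Y, hYX, hiY, hY⟩ := ih ⟨i, hi⟩ (mem_sdiff.2 ⟨hi, hc⟩)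
      exact ⟨Y, hYX.trans sdiff_subset, hiY, (ttc_of_notMem_core hc).trans hY⟩

theorem ttc_IR : ttc Pr X i = i ∨ Pr i (ttc Pr X i) i := by
  by_cases hi : i ∈ X
  · obtain ⟨Y, -, hiY, hY⟩ := exists_ttc_eq_best (Pr := Pr) hi
    rw [hY]
    exact (eq_or_ne i (best (Pr i) Y)).imp Eq.symm (best_rel hiY)
  · exact Or.inl (ttc_of_notMem hi)

theorem ttc_eq_self_of_best_eq (hY : ttc Pr X i ∈ Y) (h : best (Pr i) Y = i) :
    ttc Pr X i = i := by
  refine ttc_IR.resolve_right fun hlt => ?_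
  have hne : ttc Pr X i ≠ best (Pr i) Y := fun he => irrefl i (h ▸ he ▸ hlt)
  have hbest := best_rel hY hne
  rw [h] at hbest
  exact asymm hlt hbest

theorem exists_isPriorityAlloc_ttc : ∃ r, IsPriorityAlloc Pr X (ttc Pr X) r := by
  induction X using core_induction (Pr := Pr) with
  | step X ih =>
    rcases X.eq_empty_or_nonempty with rfl | hX
    · exact ⟨0, by simp [IsPriorityAlloc]⟩
    obtain ⟨r, hr⟩ := ih hX
    refine ⟨fun i => if i ∈ core Pr X then 0 else r i + 1, fun i hi o ho hne hfree => ?_⟩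
    by_cases hc : i ∈ core Pr X
    · rw [ttc_of_mem_core hc] at hne ⊢
      exact best_rel ho hne
    -- the first-round traders exchange their own objects among themselves
    have hoc : o ∉ core Pr X := fun hoc => by
      obtain ⟨j, hj, rfl⟩ := exists_ptr_eq_of_mem_core hoc
      exact hfree j (core_subset hj) (by simp [hj, hc]) (ttc_of_mem_core hj)
    rw [ttc_of_notMem_core hc] at hne ⊢
    refine hr i (mem_sdiff.2 ⟨hi, hc⟩) o (mem_sdiff.2 ⟨ho, hoc⟩) hne fun j hj hji => ?_
    have hjc := (mem_sdiff.1 hj).2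
    rw [← ttc_of_notMem_core hjc]
    exact hfree j (sdiff_subset hj) (by simp [hjc, hc, hji])

theorem ttc_isParetoOn : IsParetoOn Pr X (ttc Pr X) :=
  exists_isPriorityAlloc_ttc.choose_spec.isParetoOn

theorem ttc_eq_or_rel_of_reflTransGen (hi : i ∈ X) (ho : o ∈ X)
    (h : ReflTransGen (fun u v => ptr Pr X u = v) o i) :
    ttc Pr X i = o ∨ Pr i (ttc Pr X i) o := by
  induction X using core_induction (Pr := Pr) generalizing o with
  | step X ih =>
    by_cases hc : i ∈ core Pr X
    · rw [ttc_of_mem_core hc]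
      exact (eq_or_ne o (ptr Pr X i)).imp Eq.symm (best_rel ho)
    have key : o ∉ core Pr X ∧ ReflTransGen (fun u v => ptr Pr (X \ core Pr X) u = v) o i := by
      induction h using ReflTransGen.head_induction_on with
      | refl => exact ⟨hc, ReflTransGen.refl⟩
      | @head u v huv _ ih =>
        obtain ⟨hv, hvi⟩ := ih (huv ▸ ptr_mem ⟨i, hi⟩)
        have hvX : v ∈ X \ core Pr X := mem_sdiff.2 ⟨huv ▸ ptr_mem ⟨i, hi⟩, hv⟩
        refine ⟨fun hu => hv (huv ▸ ptr_mem_core hu), hvi.head ?_⟩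
        rw [← huv] at hvX ⊢
        exact best_of_subset sdiff_subset hvX
    rw [ttc_of_notMem_core hc]
    exact ih ⟨i, hi⟩ (mem_sdiff.2 ⟨hi, hc⟩) (mem_sdiff.2 ⟨ho, key.1⟩) key.2

theorem ttc_SP {Q : α → α → α → Prop} [∀ i, IsStrictTotalOrder α (Q i)]
    (hagree : ∀ j, j ≠ i → Q j = Pr j) :
    ttc Pr X i = ttc Q X i ∨ Pr i (ttc Pr X i) (ttc Q X i) := by
  by_cases hi : i ∈ X
  swap
  · rw [ttc_of_notMem hi, ttc_of_notMem hi]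
    exact Or.inl rfl
  induction X using core_induction (Pr := Pr) with
  | step X ih =>
    have hX : X.Nonempty := ⟨i, hi⟩
    have hptr : ∀ u, u ≠ i → ptr Q X u = ptr Pr X u := fun u hu => by
      simp only [ptr, hagree u hu]
    by_cases hcP : i ∈ core Pr X
    · rw [ttc_of_mem_core hcP]
      exact (eq_or_ne (ttc Q X i) (ptr Pr X i)).imp Eq.symm (best_rel (ttc_mem hi))
    by_cases hcQ : i ∈ core Q X
    · -- the cycle through `i` under `Q` leads back to `i` under `Pr` too
      rw [ttc_of_mem_core hcQ]
      refine ttc_eq_or_rel_of_reflTransGen hi (ptr_mem hX) (reflTransGen_of_eqOn_compl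
        (fun u hu => (hptr u hu).symm) (reflTransGen_of_mem_periodicPts ?_))
      exact (mem_core_iff hX).1 hcQ
    have hcore : core Q X = core Pr X := by
      ext j
      rw [mem_core_iff hX, mem_core_iff hX]
      exact ⟨fun h => periodicPts_subset_of_eqOn_compl hptr (mt (mem_core_iff hX).2 hcQ) h,
        fun h => periodicPts_subset_of_eqOn_compl (fun u hu => (hptr u hu).symm)
          (mt (mem_core_iff hX).2 hcP) h⟩
    rw [ttc_of_notMem_core hcP, ttc_of_notMem_core hcQ, hcore]
    exact ih hX (mem_sdiff.2 ⟨hi, hcP⟩)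

theorem ttc_not_mutual (hj : j ∈ X) (hk : k ∈ X) (hjk : j ≠ k) (hjj : ttc Pr X j = j)
    (hkk : ttc Pr X k = k) (hPj : Pr j k j) : ¬ Pr k j k := by
  intro hPk
  have hother : ∀ u, u ≠ j → u ≠ k → ttc Pr X u ≠ j ∧ ttc Pr X u ≠ k := fun u huj huk =>
    ⟨fun h => huj (ttc_injective (h.trans hjj.symm)),
      fun h => huk (ttc_injective (h.trans hkk.symm))⟩
  have := ttc_isParetoOn (Pr := Pr) (X := X) (fun u => Equiv.swap j k (ttc Pr X u)) (fun u hu => ?_)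
    ((Equiv.injective _).comp ttc_injective).injOn (fun u hu => ?_) hj
  · simp [hjj] at this
    exact hjk this.symm
  · simp only [Finset.mem_coe, Equiv.swap_apply_def]
    split_ifs
    exacts [hk, hj, ttc_mem hu]
  · by_cases huj : u = j
    · subst huj
      simp [hjj, hPj]
    by_cases huk : u = k
    · subst huk
      simp [hkk, hPk]
    left
    simp [Equiv.swap_apply_of_ne_of_ne (hother u huj huk).1 (hother u huj huk).2]

theorem ttc_mem_sdiff_of_swap (ha : a ∈ X) (hb : b ∈ X) (hab : ptr Pr X a = b)
    (hba : ptr Pr X b = a) (hj : j ∈ X \ {a, b}) : ttc Pr X j ∈ X \ {a, b} := by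
  obtain ⟨hjX, hja, hjb⟩ := mem_sdiff_pair.1 hj
  refine mem_sdiff_pair.2 ⟨ttc_mem hjX, fun h => hjb ?_, fun h => hja ?_⟩
  · exact ttc_injective (h.trans (ttc_eq_of_swap hb hba hab).symm)
  · exact ttc_injective (h.trans (ttc_eq_of_swap ha hab hba).symm)

theorem ttc_eq_of_swap_of_mutual (ha : a ∈ X) (hb : b ∈ X) (hab : ptr Pr X a = b)
    (hba : ptr Pr X b = a) (hR : (X \ {a, b}).card ≤ 2) (hj : j ∈ X \ {a, b})
    (hk : k ∈ X \ {a, b}) (hjk : j ≠ k) (hPj : Pr j k j) (hPk : Pr k j k) : ttc Pr X j = k := by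
  have hmem : ∀ u ∈ X \ {a, b}, ttc Pr X u = j ∨ ttc Pr X u = k := fun u hu =>
    eq_or_eq_of_card_le_two hR hj hk (ttc_mem_sdiff_of_swap ha hb hab hba hu) hjk
  refine (hmem j hj).resolve_left fun hjj => ?_
  have hkk := (hmem k hk).resolve_left fun h => hjk (ttc_injective (hjj.trans h.symm))
  exact ttc_not_mutual (mem_sdiff.1 hj).1 (mem_sdiff.1 hk).1 hjk hjj hkk hPj hPk

end TTC

section Cycle

variable [DecidableEq α] {a b x y z : α}

/-- The cycle `a ↦ b ↦ x ↦ y ↦ a`, which degenerates to `a ↦ b ↦ x ↦ a` when `y = a`. -/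
def cycle (a b x y : α) : Equiv.Perm α :=
  (Equiv.swap a b).trans ((Equiv.swap a x).trans (Equiv.swap a y))

theorem cycle_apply_left (hab : a ≠ b) (hxb : x ≠ b) (hyb : y ≠ b) : cycle a b x y a = b := by
  simp [cycle, Equiv.swap_apply_of_ne_of_ne, hab.symm, hxb.symm, hyb.symm]

theorem cycle_apply_second (hxa : x ≠ a) (hyx : y ≠ x) : cycle a b x y b = x := by
  simp [cycle, Equiv.swap_apply_of_ne_of_ne, hxa, hyx.symm]

theorem cycle_apply_third (hxa : x ≠ a) (hxb : x ≠ b) : cycle a b x y x = y := by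
  simp [cycle, Equiv.swap_apply_of_ne_of_ne, hxa, hxb]

theorem cycle_apply_fourth (hya : y ≠ a) (hyb : y ≠ b) (hyx : y ≠ x) : cycle a b x y y = a := by
  simp [cycle, Equiv.swap_apply_of_ne_of_ne, hya, hyb, hyx]

theorem cycle_apply_of_ne (hza : z ≠ a) (hzb : z ≠ b) (hzx : z ≠ x) (hzy : z ≠ y) :
    cycle a b x y z = z := by
  simp [cycle, Equiv.swap_apply_of_ne_of_ne, hza, hzb, hzx, hzy]

end Cycle

section Submarket

variable [Nonempty α] [DecidableEq α] (Pr : α → α → α → Prop) (S : Finset α) (a b : α)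

/-- When `#(S \ {a, b}) ≤ 2`, this says that the pointers into `S \ {b}` have no cycle inside
`S \ {a, b}`. -/
def RestAcyclic : Prop :=
  ∀ j ∈ S \ {a, b}, ∀ k ∈ S \ {a, b}, ptr Pr (S.erase b) j = k → ptr Pr (S.erase b) k ≠ j

def IsException : Prop :=
  best (Pr a) S = b ∧ best (Pr b) S = a ∧ best (Pr b) (S.erase a) ≠ b ∧ RestAcyclic Pr S a b

def exceptionalAlloc : Equiv.Perm α :=
  cycle a b (best (Pr b) (S.erase a)) (ptr Pr (S.erase b) (best (Pr b) (S.erase a)))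

open Classical in
def submarketMech (S : Finset α) (a b : α) (Pr : α → α → α → Prop) : α → α :=
  if IsException Pr S a b then exceptionalAlloc Pr S a b else ttc Pr S

/-- The objects among which agent `i` of `S` gets its favourite, whatever it reports, when the
others report as in some exceptional profile `Pr`. -/
def menu (i : α) : Finset α :=
  if i = a then S
  else if i = b then S.erase a
  else if best (Pr b) (S.erase a) ≠ i ∧ ptr Pr (S.erase b) (best (Pr b) (S.erase a)) = a then {i}
  else S.erase b

variable {Pr S a b} {i j k : α}

theorem RestAcyclic.ptr_ne (h : RestAcyclic Pr S a b) (hj : j ∈ S \ {a, b}) :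
    ptr Pr (S.erase b) j ≠ j :=
  fun he => h j hj j hj he he

theorem RestAcyclic.congr {P' : α → α → α → Prop} (h : RestAcyclic P' S a b)
    (hagree : ∀ k ∈ S \ {a, b}, Pr k = P' k) : RestAcyclic Pr S a b := by
  intro j hj k hk hjk
  simp only [ptr, hagree j hj, hagree k hk] at hjk ⊢
  exact h j hj k hk hjk

theorem exists_cycle_of_not_isException {P' : α → α → α → Prop} (hE' : IsException P' S a b)
    (hagree : ∀ k, k ≠ j → Pr k = P' k) (hj : j ∈ S \ {a, b}) (hE : ¬ IsException Pr S a b) :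
    ∃ k ∈ S \ {a, b}, ptr Pr (S.erase b) j = k ∧ ptr Pr (S.erase b) k = j := by
  obtain ⟨-, hja, hjb⟩ := mem_sdiff_pair.1 hj
  have hptr : ∀ u, u ≠ j → ptr Pr (S.erase b) u = ptr P' (S.erase b) u := fun u hu => by
    simp only [ptr, hagree u hu]
  by_contra hnone
  refine hE ⟨(hagree a (Ne.symm hja)).symm ▸ hE'.1, (hagree b (Ne.symm hjb)).symm ▸ hE'.2.1,
    (hagree b (Ne.symm hjb)).symm ▸ hE'.2.2.1, fun u hu v hv huv hvu => ?_⟩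
  by_cases huj : u = j
  · subst huj
    exact hnone ⟨v, hv, huv, hvu⟩
  by_cases hvj : v = j
  · subst hvj
    exact hnone ⟨u, hu, hvu, huv⟩
  exact hE'.2.2.2 u hu v hv ((hptr u huj).symm.trans huv) ((hptr v hvj).symm.trans hvu)

variable [∀ i, IsStrictTotalOrder α (Pr i)]

theorem ptr_erase_mem_sdiff (hj : j ∈ S \ {a, b}) (hja : ptr Pr (S.erase b) j ≠ a) :
    ptr Pr (S.erase b) j ∈ S \ {a, b} := by
  obtain ⟨hjS, -, hjb⟩ := mem_sdiff_pair.1 hj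
  obtain ⟨hb, hS⟩ := mem_erase.1 (ptr_mem (Pr := Pr) (i := j) ⟨j, mem_erase.2 ⟨hjb, hjS⟩⟩)
  exact mem_sdiff_pair.2 ⟨hS, hja, hb⟩

theorem RestAcyclic.ptr_ptr_eq (h : RestAcyclic Pr S a b) (hR : (S \ {a, b}).card ≤ 2)
    (hj : j ∈ S \ {a, b}) (hja : ptr Pr (S.erase b) j ≠ a) :
    ptr Pr (S.erase b) (ptr Pr (S.erase b) j) = a := by
  have hk := ptr_erase_mem_sdiff hj hja
  by_contra hka
  rcases eq_or_eq_of_card_le_two hR hj hk (ptr_erase_mem_sdiff hk hka) (h.ptr_ne hj).symm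
    with hlj | hlk
  exacts [h j hj _ hk rfl hlj, h.ptr_ne hk hlk]

theorem RestAcyclic.reflTransGen_left_or_right (h : RestAcyclic Pr S a b)
    (hR : (S \ {a, b}).card ≤ 2) (hj : j ∈ S) :
    ReflTransGen (fun u v => ptr Pr S u = v) j a ∨ ReflTransGen (fun u v => ptr Pr S u = v) j b := by
  by_cases hja : j = a
  · exact Or.inl (hja ▸ ReflTransGen.refl)
  by_cases hjb : j = b
  · exact Or.inr (hjb ▸ ReflTransGen.refl)
  have hS : S.Nonempty := ⟨j, hj⟩
  have hT : ∀ u v, v ∈ S \ {a, b} → ptr Pr S u = v → ptr Pr (S.erase b) u = v := by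
    intro u v hv huv
    rw [← huv] at hv ⊢
    exact best_of_subset (erase_subset b S) (mem_erase.2 ⟨(mem_sdiff_pair.1 hv).2.2, ptr_mem hS⟩)
  have hnext : ∀ u, ptr Pr S u = a ∨ ptr Pr S u = b ∨ ptr Pr S u ∈ S \ {a, b} := fun u => by
    by_cases hua : ptr Pr S u = a
    · exact Or.inl hua
    by_cases hub : ptr Pr S u = b
    · exact Or.inr (Or.inl hub)
    exact Or.inr (Or.inr (mem_sdiff_pair.2 ⟨ptr_mem hS, hua, hub⟩))
  have hjR : j ∈ S \ {a, b} := mem_sdiff_pair.2 ⟨hj, hja, hjb⟩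
  rcases hnext j with h1 | h1 | hk
  · exact Or.inl (ReflTransGen.single h1)
  · exact Or.inr (ReflTransGen.single h1)
  have hkj : ptr Pr S j ≠ j := fun he => h.ptr_ne hjR (hT j j hjR he)
  rcases hnext (ptr Pr S j) with h2 | h2 | hl
  · exact Or.inl (ReflTransGen.head rfl (ReflTransGen.single h2))
  · exact Or.inr (ReflTransGen.head rfl (ReflTransGen.single h2))
  exfalso
  rcases eq_or_eq_of_card_le_two hR hjR hk hl hkj.symm with hlj | hlk
  · exact h j hjR _ hk (hT j _ hk rfl) (hT _ j hjR hlj)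
  · exact h.ptr_ne hk (hT _ _ hk hlk)

theorem best_erase_mem_sdiff (hab : a ≠ b) (hb : b ∈ S) (h : best (Pr b) (S.erase a) ≠ b) :
    best (Pr b) (S.erase a) ∈ S \ {a, b} := by
  obtain ⟨hba, hS⟩ := mem_erase.1 (best_mem (P := Pr b) ⟨b, mem_erase.2 ⟨hab.symm, hb⟩⟩)
  exact mem_sdiff_pair.2 ⟨hS, hba, h⟩

theorem IsException.best_erase_mem (hE : IsException Pr S a b) (hab : a ≠ b) (hb : b ∈ S) :
    best (Pr b) (S.erase a) ∈ S \ {a, b} :=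
  best_erase_mem_sdiff hab hb hE.2.2.1

theorem IsException.ptr_best_erase_mem (hE : IsException Pr S a b) (hab : a ≠ b) (hb : b ∈ S) :
    ptr Pr (S.erase b) (best (Pr b) (S.erase a)) ∈ S.erase b :=
  ptr_mem ⟨_, mem_erase.2 ⟨(mem_sdiff_pair.1 (hE.best_erase_mem hab hb)).2.2,
    (mem_sdiff_pair.1 (hE.best_erase_mem hab hb)).1⟩⟩

theorem IsException.exceptionalAlloc_apply_left (hE : IsException Pr S a b) (hab : a ≠ b)
    (hb : b ∈ S) : exceptionalAlloc Pr S a b a = b :=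
  cycle_apply_left hab (mem_sdiff_pair.1 (hE.best_erase_mem hab hb)).2.2
    (mem_erase.1 (hE.ptr_best_erase_mem hab hb)).1

theorem IsException.exceptionalAlloc_apply_right (hE : IsException Pr S a b) (hab : a ≠ b)
    (hb : b ∈ S) : exceptionalAlloc Pr S a b b = best (Pr b) (S.erase a) :=
  cycle_apply_second (mem_sdiff_pair.1 (hE.best_erase_mem hab hb)).2.1
    (hE.2.2.2.ptr_ne (hE.best_erase_mem hab hb))

theorem IsException.exceptionalAlloc_mapsTo (hE : IsException Pr S a b) (hab : a ≠ b)
    (ha : a ∈ S) (hb : b ∈ S) : Set.MapsTo (exceptionalAlloc Pr S a b) S S := by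
  have hxR := hE.best_erase_mem hab hb
  have hyx := hE.2.2.2.ptr_ne hxR
  obtain ⟨hyb, hyS⟩ := mem_erase.1 (hE.ptr_best_erase_mem hab hb)
  obtain ⟨hxS, hxa, hxb⟩ := mem_sdiff_pair.1 hxR
  intro i hi
  simp only [exceptionalAlloc, Finset.mem_coe] at hi ⊢
  set x := best (Pr b) (S.erase a)
  set y := ptr Pr (S.erase b) x
  by_cases hia : i = a
  · rwa [hia, cycle_apply_left hab hxb hyb]
  by_cases hib : i = b
  · rwa [hib, cycle_apply_second hxa hyx]
  by_cases hix : i = x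
  · rwa [hix, cycle_apply_third hxa hxb]
  by_cases hiy : i = y
  · rwa [hiy, cycle_apply_fourth (hiy ▸ hia) hyb hyx]
  rwa [cycle_apply_of_ne hia hib hix hiy]

theorem IsException.exceptionalAlloc_IR (hE : IsException Pr S a b) (hab : a ≠ b)
    (ha : a ∈ S) (hb : b ∈ S) (hR : (S \ {a, b}).card ≤ 2) (i : α) :
    exceptionalAlloc Pr S a b i = i ∨ Pr i (exceptionalAlloc Pr S a b i) i := by
  have hxR := hE.best_erase_mem hab hb
  have hyT := hE.ptr_best_erase_mem hab hb
  have hyx := hE.2.2.2.ptr_ne hxR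
  simp only [exceptionalAlloc]
  set x := best (Pr b) (S.erase a)
  set y := ptr Pr (S.erase b) x
  obtain ⟨hxS, hxa, hxb⟩ := mem_sdiff_pair.1 hxR
  obtain ⟨hyb, hyS⟩ := mem_erase.1 hyT
  by_cases hia : i = a
  · subst hia
    rw [cycle_apply_left hab hxb hyb, ← hE.1]
    exact Or.inr (best_rel ha (hE.1 ▸ hab))
  by_cases hib : i = b
  · subst hib
    rw [cycle_apply_second hxa hyx]
    exact Or.inr (best_rel (mem_erase.2 ⟨hab.symm, hb⟩) (Ne.symm hxb))
  by_cases hix : i = x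
  · rw [hix, cycle_apply_third hxa hxb]
    exact Or.inr (ptr_rel (mem_erase.2 ⟨hxb, hxS⟩) hyx.symm)
  by_cases hiy : i = y
  · have hya : y ≠ a := hiy ▸ hia
    have hpy : ptr Pr (S.erase b) y = a := hE.2.2.2.ptr_ptr_eq hR hxR hya
    rw [hiy, cycle_apply_fourth hya hyb hyx]
    have := ptr_rel (Pr := Pr) (i := y) hyT (by rw [hpy]; exact hya)
    rw [hpy] at this
    exact Or.inr this
  exact Or.inl (cycle_apply_of_ne hia hib hix hiy)

theorem IsException.exists_apply_eq_left (hE : IsException Pr S a b) (hab : a ≠ b) (hb : b ∈ S)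
    (hR : (S \ {a, b}).card ≤ 2) :
    ∃ w ∈ S, w ≠ a ∧ exceptionalAlloc Pr S a b w = a ∧ ptr Pr (S.erase b) w = a := by
  have hxR := hE.best_erase_mem hab hb
  have hyx := hE.2.2.2.ptr_ne hxR
  obtain ⟨hxS, hxa, hxb⟩ := mem_sdiff_pair.1 hxR
  obtain ⟨hyb, hyS⟩ := mem_erase.1 (hE.ptr_best_erase_mem hab hb)
  by_cases hya : ptr Pr (S.erase b) (best (Pr b) (S.erase a)) = a
  · exact ⟨_, hxS, hxa, (cycle_apply_third hxa hxb).trans hya, hya⟩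
  · exact ⟨_, hyS, hya, cycle_apply_fourth hya hyb hyx, hE.2.2.2.ptr_ptr_eq hR hxR hya⟩

theorem IsException.isPriorityAlloc (hE : IsException Pr S a b) (hab : a ≠ b) (ha : a ∈ S)
    (hb : b ∈ S) (hR : (S \ {a, b}).card ≤ 2) :
    IsPriorityAlloc Pr S (exceptionalAlloc Pr S a b) fun i =>
      if i = a then 0 else if exceptionalAlloc Pr S a b i = a then 1 else if i = b then 2 else 3 := by
  have hxR := hE.best_erase_mem hab hb
  have hσS := hE.exceptionalAlloc_mapsTo hab ha hb
  have hσa := hE.exceptionalAlloc_apply_left hab hb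
  have hσb := hE.exceptionalAlloc_apply_right hab hb
  obtain ⟨w, hwS, hwa, hσw, hpw⟩ := hE.exists_apply_eq_left hab hb hR
  set σ := exceptionalAlloc Pr S a b
  set x := best (Pr b) (S.erase a)
  have hxa := (mem_sdiff_pair.1 hxR).2.1
  intro i hi o ho hne hfree
  by_cases hia : i = a
  · subst hia
    rw [hσa, ← hE.1] at hne ⊢
    exact best_rel ho hne
  have hob : o ≠ b := fun h => hfree a ha (by simp only [↓reduceIte, hia]; split_ifs <;> omega)
    (hσa.trans h.symm)
  by_cases hσi : σ i = a
  · obtain rfl : i = w := σ.injective (hσi.trans hσw.symm)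
    rw [hσi, ← hpw] at hne ⊢
    exact ptr_rel (mem_erase.2 ⟨hob, ho⟩) hne
  have hoa : o ≠ a := fun h => hfree w hwS
    (by simp only [↓reduceIte, hia, hσi, hwa, hσw]; split_ifs <;> omega) (hσw.trans h.symm)
  by_cases hib : i = b
  · subst hib
    rw [hσb] at hne ⊢
    exact best_rel (mem_erase.2 ⟨hoa, ho⟩) hne
  have hox : o ≠ x := fun h =>
    hfree b hb (by simp [hia, hσi, hib, hab.symm, hσb, hxa]) (hσb.trans h.symm)
  -- otherwise `x`, `σ i` and `o` would be three agents of `S \ {a, b}`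
  have hσiR : σ i ∈ S \ {a, b} :=
    mem_sdiff_pair.2 ⟨hσS hi, hσi, fun h => hia (σ.injective (h.trans hσa.symm))⟩
  have hσix : σ i ≠ x := fun h => hib (σ.injective (h.trans hσb.symm))
  rcases eq_or_eq_of_card_le_two hR hxR hσiR (mem_sdiff_pair.2 ⟨ho, hoa, hob⟩) hσix.symm
    with h | h
  exacts [absurd h hox, absurd h hne]

theorem IsException.exceptionalAlloc_apply_of_mem_sdiff (hE : IsException Pr S a b)
    (hab : a ≠ b) (hb : b ∈ S) (hR : (S \ {a, b}).card ≤ 2) (hj : j ∈ S \ {a, b}) :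
    exceptionalAlloc Pr S a b j =
      if best (Pr b) (S.erase a) ≠ j ∧ ptr Pr (S.erase b) (best (Pr b) (S.erase a)) = a then j
      else ptr Pr (S.erase b) j := by
  have hxR := hE.best_erase_mem hab hb
  have hyT := hE.ptr_best_erase_mem hab hb
  have hyx := hE.2.2.2.ptr_ne hxR
  simp only [exceptionalAlloc]
  set x := best (Pr b) (S.erase a)
  set y := ptr Pr (S.erase b) x
  obtain ⟨-, hxa, hxb⟩ := mem_sdiff_pair.1 hxR
  obtain ⟨hyb, hyS⟩ := mem_erase.1 hyT
  obtain ⟨-, hja, hjb⟩ := mem_sdiff_pair.1 hj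
  by_cases hxj : x = j
  · rw [if_neg fun h => h.1 hxj, ← hxj]
    exact cycle_apply_third hxa hxb
  by_cases hya : y = a
  · rw [if_pos ⟨hxj, hya⟩]
    exact cycle_apply_of_ne hja hjb (Ne.symm hxj) (hya ▸ hja)
  rw [if_neg fun h => hya h.2]
  have hyj : y = j := (eq_or_eq_of_card_le_two hR hxR hj
    (mem_sdiff_pair.2 ⟨hyS, hya, hyb⟩) hxj).resolve_left hyx
  rw [← hyj, cycle_apply_fourth hya hyb hyx, hE.2.2.2.ptr_ptr_eq hR hxR hya]

section Menu

variable {P' : α → α → α → Prop}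

theorem ttc_apply_of_not_isException (hE' : IsException P' S a b)
    (hagree : ∀ k, k ≠ j → Pr k = P' k) (hj : j ∈ S \ {a, b}) (hE : ¬ IsException Pr S a b)
    (hab : a ≠ b) (ha : a ∈ S) (hb : b ∈ S) (hR : (S \ {a, b}).card ≤ 2) :
    ttc Pr S j =
      if best (Pr b) (S.erase a) ≠ j ∧ ptr Pr (S.erase b) (best (Pr b) (S.erase a)) = a then j
      else ptr Pr (S.erase b) j := by
  obtain ⟨hjS, hja, hjb⟩ := mem_sdiff_pair.1 hj
  have hxR : best (Pr b) (S.erase a) ∈ S \ {a, b} :=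
    best_erase_mem_sdiff hab hb (by rw [hagree b (Ne.symm hjb)]; exact hE'.2.2.1)
  have hab' : ptr Pr S a = b := by rw [ptr, hagree a (Ne.symm hja)]; exact hE'.1
  have hba' : ptr Pr S b = a := by rw [ptr, hagree b (Ne.symm hjb)]; exact hE'.2.1
  obtain ⟨k, hk, hjk, hkj⟩ := exists_cycle_of_not_isException hE' hagree hj hE
  have hjT := mem_erase_of_mem_sdiff_pair hj
  by_cases hkj' : k = j
  · subst hkj'
    have := ttc_eq_self_of_best_eq (Y := S.erase b)
      (mem_erase_of_mem_sdiff_pair (ttc_mem_sdiff_of_swap ha hb hab' hba' hj)) hjk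
    rw [this]
    split_ifs <;> [rfl; exact hjk.symm]
  -- `j` and `k` swap, and `x = k` would point to `j`
  have hkT := mem_erase_of_mem_sdiff_pair hk
  rw [ttc_eq_of_swap_of_mutual ha hb hab' hba' hR hj hk (Ne.symm hkj')
    (hjk ▸ ptr_rel hjT (hjk ▸ Ne.symm hkj')) (hkj ▸ ptr_rel hkT (hkj ▸ hkj')), if_neg, hjk]
  rintro ⟨hxj, hxa⟩
  rw [(eq_or_eq_of_card_le_two hR hj hk hxR (Ne.symm hkj')).resolve_left hxj, hkj] at hxa
  exact hja hxa

theorem self_mem_menu (hab : a ≠ b) (hi : i ∈ S) : i ∈ menu P' S a b i := by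
  unfold menu
  split_ifs with hia hib
  · exact hi
  · exact mem_erase.2 ⟨hib ▸ hab.symm, hi⟩
  · exact mem_singleton_self i
  · exact mem_erase.2 ⟨‹¬i = b›, hi⟩

theorem submarketMech_apply_left (hE' : IsException P' S a b)
    (hagree : ∀ k, k ≠ a → Pr k = P' k) (hab : a ≠ b) (ha : a ∈ S) (hb : b ∈ S)
    (hR : (S \ {a, b}).card ≤ 2) : submarketMech S a b Pr a = best (Pr a) (menu P' S a b a) := by
  obtain ⟨-, hba, hxb, hrest⟩ := hE'
  rw [← hagree b hab.symm] at hba hxb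
  have hrest' : RestAcyclic Pr S a b :=
    hrest.congr fun k hk => hagree k (mem_sdiff_pair.1 hk).2.1
  rw [menu, if_pos rfl]
  by_cases h : best (Pr a) S = b
  · have hE : IsException Pr S a b := ⟨h, hba, hxb, hrest'⟩
    rw [submarketMech, if_pos hE, hE.exceptionalAlloc_apply_left hab hb, h]
  · rw [submarketMech, if_neg fun hE => h hE.1]
    refine ttc_eq_ptr_of_reflTransGen ha ?_
    exact (hrest'.reflTransGen_left_or_right hR (ptr_mem ⟨a, ha⟩)).elim id fun h' => h'.tail hba

theorem submarketMech_apply_right (hE' : IsException P' S a b)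
    (hagree : ∀ k, k ≠ b → Pr k = P' k) (hgap : best (Pr b) S = a → best (Pr b) (S.erase a) ≠ b)
    (hab : a ≠ b) (hb : b ∈ S) (hR : (S \ {a, b}).card ≤ 2) :
    submarketMech S a b Pr b = best (Pr b) (menu P' S a b b) := by
  obtain ⟨hab', -, -, hrest⟩ := hE'
  rw [← hagree a hab] at hab'
  have hrest' : RestAcyclic Pr S a b :=
    hrest.congr fun k hk => hagree k (mem_sdiff_pair.1 hk).2.2
  rw [menu, if_neg hab.symm, if_pos rfl]
  by_cases h : best (Pr b) S = a
  · have hE : IsException Pr S a b := ⟨hab', h, hgap h, hrest'⟩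
    rw [submarketMech, if_pos hE, hE.exceptionalAlloc_apply_right hab hb]
  · rw [submarketMech, if_neg fun hE => h hE.2.1]
    rw [ttc_eq_ptr_of_reflTransGen hb ((hrest'.reflTransGen_left_or_right hR
      (ptr_mem ⟨b, hb⟩)).elim (fun h' => h'.tail hab') id)]
    exact (best_of_subset (erase_subset a S) (mem_erase.2 ⟨h, best_mem ⟨b, hb⟩⟩)).symm

theorem submarketMech_apply_of_mem_sdiff (hE' : IsException P' S a b)
    (hagree : ∀ k, k ≠ j → Pr k = P' k) (hj : j ∈ S \ {a, b}) (hab : a ≠ b) (ha : a ∈ S)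
    (hb : b ∈ S) (hR : (S \ {a, b}).card ≤ 2) :
    submarketMech S a b Pr j = best (Pr j) (menu P' S a b j) := by
  obtain ⟨-, hja, hjb⟩ := mem_sdiff_pair.1 hj
  have hmenu : menu P' S a b j =
      if best (Pr b) (S.erase a) ≠ j ∧ ptr Pr (S.erase b) (best (Pr b) (S.erase a)) = a then {j}
      else S.erase b := by
    rw [menu, if_neg hja, if_neg hjb, hagree b (Ne.symm hjb)]
    by_cases hxj : best (P' b) (S.erase a) = j
    · simp [hxj]
    · rw [ptr, ptr, hagree _ hxj]
  have hval : submarketMech S a b Pr j =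
      if best (Pr b) (S.erase a) ≠ j ∧ ptr Pr (S.erase b) (best (Pr b) (S.erase a)) = a then j
      else ptr Pr (S.erase b) j := by
    by_cases hE : IsException Pr S a b
    · rw [submarketMech, if_pos hE, hE.exceptionalAlloc_apply_of_mem_sdiff hab hb hR hj]
    · rw [submarketMech, if_neg hE, ttc_apply_of_not_isException hE' hagree hj hE hab ha hb hR]
  rw [hval, hmenu]
  split_ifs
  exacts [best_singleton.symm, rfl]

theorem submarketMech_apply (hE' : IsException P' S a b) (hagree : ∀ k, k ≠ i → Pr k = P' k)
    (hgap : best (Pr b) S = a → best (Pr b) (S.erase a) ≠ b) (hi : i ∈ S) (hab : a ≠ b)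
    (ha : a ∈ S) (hb : b ∈ S) (hR : (S \ {a, b}).card ≤ 2) :
    submarketMech S a b Pr i = best (Pr i) (menu P' S a b i) := by
  by_cases hia : i = a
  · subst hia
    exact submarketMech_apply_left hE' hagree hab hi hb hR
  by_cases hib : i = b
  · subst hib
    exact submarketMech_apply_right hE' hagree hgap hab hi hR
  exact submarketMech_apply_of_mem_sdiff hE' hagree (mem_sdiff_pair.2 ⟨hi, hia, hib⟩) hab ha hb hR

end Menu

theorem submarketMech_SP {Q : α → α → α → Prop} [∀ i, IsStrictTotalOrder α (Q i)]
    (hagree : ∀ j, j ≠ i → Q j = Pr j) (hgapP : best (Pr b) S = a → best (Pr b) (S.erase a) ≠ b)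
    (hgapQ : best (Q b) S = a → best (Q b) (S.erase a) ≠ b) (hi : i ∈ S) (hab : a ≠ b)
    (ha : a ∈ S) (hb : b ∈ S) (hR : (S \ {a, b}).card ≤ 2) :
    submarketMech S a b Pr i = submarketMech S a b Q i ∨
      Pr i (submarketMech S a b Pr i) (submarketMech S a b Q i) := by
  by_cases hEP : IsException Pr S a b
  · rw [submarketMech_apply hEP (fun _ _ => rfl) hgapP hi hab ha hb hR,
      submarketMech_apply hEP hagree hgapQ hi hab ha hb hR]
    exact best_eq_or_rel ⟨i, self_mem_menu hab hi⟩
  by_cases hEQ : IsException Q S a b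
  · rw [submarketMech_apply hEQ (fun k hk => (hagree k hk).symm) hgapP hi hab ha hb hR,
      submarketMech_apply hEQ (fun _ _ => rfl) hgapQ hi hab ha hb hR]
    exact best_eq_or_rel ⟨i, self_mem_menu hab hi⟩
  rw [submarketMech, submarketMech, if_neg hEP, if_neg hEQ]
  exact ttc_SP hagree

theorem submarketMech_mapsTo (hab : a ≠ b) (ha : a ∈ S) (hb : b ∈ S) :
    Set.MapsTo (submarketMech S a b Pr) S S := by
  unfold submarketMech
  split_ifs with hE
  · exact hE.exceptionalAlloc_mapsTo hab ha hb
  · exact fun i hi => ttc_mem hi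

theorem submarketMech_injective : Injective (submarketMech S a b Pr) := by
  unfold submarketMech
  split_ifs
  exacts [Equiv.injective _, ttc_injective]

theorem submarketMech_IR (hab : a ≠ b) (ha : a ∈ S) (hb : b ∈ S) (hR : (S \ {a, b}).card ≤ 2)
    (i : α) : submarketMech S a b Pr i = i ∨ Pr i (submarketMech S a b Pr i) i := by
  unfold submarketMech
  split_ifs with hE
  exacts [hE.exceptionalAlloc_IR hab ha hb hR i, ttc_IR]

theorem submarketMech_isParetoOn (hab : a ≠ b) (ha : a ∈ S) (hb : b ∈ S)
    (hR : (S \ {a, b}).card ≤ 2) : IsParetoOn Pr S (submarketMech S a b Pr) := by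
  unfold submarketMech
  split_ifs with hE
  exacts [(hE.isPriorityAlloc hab ha hb hR).isParetoOn, ttc_isParetoOn]

end Submarket

section Extension

variable {Pr : α → α → α → Prop} {S : Finset α} {i k : α}

variable (Pr S) in
def IsIsolated : Prop := ∀ k ∉ S, ∀ o ∈ S, Pr k k o

theorem IsIsolated.notMem [∀ i, IsStrictTotalOrder α (Pr i)] (h : IsIsolated Pr S) (hk : k ∉ S)
    {o : α} (ho : o = k ∨ Pr k o k) : o ∉ S := fun hoS =>
  ho.elim (fun hok => hk (hok ▸ hoS)) fun hlt => asymm hlt (h k hk o hoS)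

theorem mapsTo_of_mapsTo_compl [DecidableEq α] [Fintype α] {f : α → α} (hf : Injective f)
    (h : ∀ k, k ∉ S → f k ∉ S) : Set.MapsTo f S S := by
  intro i hi
  by_contra hfi
  obtain ⟨k, hk, hki⟩ := surjOn_of_injOn_of_card_le f (s := Sᶜ) (t := Sᶜ)
    (fun k hk => by simpa using h k (by simpa using hk)) hf.injOn le_rfl (by simpa using hfi)
  exact (by simpa using hk : k ∉ S) (hf hki ▸ hi)

variable [Nonempty α] [DecidableEq α] [Fintype α]

open Classical in
variable (S) in
/-- Agents outside `S` always get their object under top trading cycles on the whole market, so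
that their incentives are those of top trading cycles. -/
def extendByTTC (inner : (α → α → α → Prop) → α → α) (Pr : α → α → α → Prop) : α → α :=
  if IsIsolated Pr S then fun i => if i ∈ S then inner Pr i else ttc Pr univ i
  else ttc Pr univ

variable {inner : (α → α → α → Prop) → α → α}

theorem extendByTTC_of_notMem (hk : k ∉ S) : extendByTTC S inner Pr k = ttc Pr univ k := by
  unfold extendByTTC
  split_ifs <;> simp [hk]

theorem extendByTTC_of_mem (h : IsIsolated Pr S) (hi : i ∈ S) :
    extendByTTC S inner Pr i = inner Pr i := by
  simp [extendByTTC, h, hi]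

theorem extendByTTC_of_not_isIsolated (h : ¬ IsIsolated Pr S) :
    extendByTTC S inner Pr = ttc Pr univ := by
  simp [extendByTTC, h]

variable [∀ i, IsStrictTotalOrder α (Pr i)]

theorem extendByTTC_injective (hmaps : Set.MapsTo (inner Pr) S S)
    (hinj : Set.InjOn (inner Pr) S) : Injective (extendByTTC S inner Pr) := by
  by_cases hiso : IsIsolated Pr S
  swap
  · rw [extendByTTC_of_not_isIsolated hiso]
    exact ttc_injective
  have hout : ∀ k, k ∉ S → ttc Pr univ k ∉ S := fun k hk => hiso.notMem hk ttc_IR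
  intro p q h
  by_cases hp : p ∈ S <;> by_cases hq : q ∈ S <;>
    simp only [extendByTTC_of_mem hiso, extendByTTC_of_notMem, hp, hq, not_false_eq_true] at h
  · exact hinj hp hq h
  · exact absurd (h ▸ hmaps hp) (hout q hq)
  · exact absurd (h.symm ▸ hmaps hq) (hout p hp)
  · exact ttc_injective h

theorem extendByTTC_IR (hIR : ∀ i ∈ S, inner Pr i = i ∨ Pr i (inner Pr i) i) (i : α) :
    extendByTTC S inner Pr i = i ∨ Pr i (extendByTTC S inner Pr i) i := by
  by_cases hi : i ∈ S
  · by_cases hiso : IsIsolated Pr S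
    · rw [extendByTTC_of_mem hiso hi]
      exact hIR i hi
    · rw [extendByTTC_of_not_isIsolated hiso]
      exact ttc_IR
  · rw [extendByTTC_of_notMem hi]
    exact ttc_IR

theorem extendByTTC_isParetoOn (hPE : IsParetoOn Pr S (inner Pr)) :
    IsParetoOn Pr univ (extendByTTC S inner Pr) := by
  intro y _ hy hdom
  by_cases hiso : IsIsolated Pr S
  swap
  · rw [extendByTTC_of_not_isIsolated hiso] at hdom ⊢
    exact ttc_isParetoOn y (fun i _ => mem_coe.2 (mem_univ _)) hy hdom
  have hyinj : Injective y := fun p q h => hy (mem_coe.2 (mem_univ p)) (mem_coe.2 (mem_univ q)) h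
  have hout : ∀ k, k ∉ S → y k ∉ S := fun k hk => by
    have := hdom k (mem_univ k)
    rw [extendByTTC_of_notMem hk] at this
    exact hiso.notMem hk (eq_or_rel_trans this ttc_IR)
  have hin : Set.EqOn y (inner Pr) S := hPE y (mapsTo_of_mapsTo_compl hyinj hout)
    (hyinj.injOn) fun i hi => by simpa [extendByTTC_of_mem hiso hi] using hdom i (mem_univ i)
  -- outside `S`, compare `y` with TTC after restoring the TTC objects inside `S`
  have httcS : ∀ j ∈ S, ttc Pr univ j ∈ S :=
    mapsTo_of_mapsTo_compl ttc_injective fun k hk => hiso.notMem hk ttc_IR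
  set z := fun i => if i ∈ S then ttc Pr univ i else y i
  have hzinj : Set.InjOn z (univ : Finset α) := by
    intro p _ q _ h
    by_cases hp : p ∈ S <;> by_cases hq : q ∈ S <;> simp only [z, hp, hq, if_true, if_false] at h
    · exact ttc_injective h
    · exact absurd (h ▸ httcS p hp) (hout q hq)
    · exact absurd (h.symm ▸ httcS q hq) (hout p hp)
    · exact hyinj h
  have hzdom : ∀ i ∈ univ, z i = ttc Pr univ i ∨ Pr i (z i) (ttc Pr univ i) := by
    intro i _
    by_cases hi : i ∈ S
    · simp [z, hi]
    · simpa [z, hi, extendByTTC_of_notMem hi] using hdom i (mem_univ i)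
  have hz := ttc_isParetoOn z (fun i _ => mem_coe.2 (mem_univ _)) hzinj hzdom
  intro i _
  by_cases hi : i ∈ S
  · rw [extendByTTC_of_mem hiso hi]
    exact hin hi
  · rw [extendByTTC_of_notMem hi]
    simpa [z, hi] using hz (mem_univ i)

theorem extendByTTC_SP {Q : α → α → α → Prop} [∀ i, IsStrictTotalOrder α (Q i)]
    (hagree : ∀ j, j ≠ i → Q j = Pr j)
    (hSP : i ∈ S → IsIsolated Pr S → inner Pr i = inner Q i ∨ Pr i (inner Pr i) (inner Q i)) :
    extendByTTC S inner Pr i = extendByTTC S inner Q i ∨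
      Pr i (extendByTTC S inner Pr i) (extendByTTC S inner Q i) := by
  by_cases hi : i ∈ S
  swap
  · rw [extendByTTC_of_notMem hi, extendByTTC_of_notMem hi]
    exact ttc_SP hagree
  have hiso : IsIsolated Q S ↔ IsIsolated Pr S := by
    have hQ : ∀ k, k ∉ S → Q k = Pr k := fun k hk => hagree k fun h => hk (h ▸ hi)
    exact forall₂_congr fun k hk => by rw [hQ k hk]
  by_cases h : IsIsolated Pr S
  · rw [extendByTTC_of_mem h hi, extendByTTC_of_mem (hiso.2 h) hi]
    exact hSP hi h
  · rw [extendByTTC_of_not_isIsolated h, extendByTTC_of_not_isIsolated (mt hiso.1 h)]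
    exact ttc_SP hagree

end Extension

section Fin

variable {n : ℕ} [Nonempty (Fin n)]

theorem top_coe_iff {P : PrefRel n} [IsStrictTotalOrder (Fin n) P] {S : Finset (Fin n)}
    {m : Fin n} (hm : m ∈ S) : top P S m ↔ best P S = m :=
  ⟨fun h => best_eq_of_forall hm h.2, fun h => ⟨hm, fun _ hc hne => h ▸ best_rel hc (h ▸ hne)⟩⟩

theorem not_isTTC_of_isException {Pr : Fin n → PrefRel n} [∀ i, IsStrictTotalOrder (Fin n) (Pr i)]
    {S : Finset (Fin n)} {a b : Fin n} (hiso : IsIsolated Pr S) (hE : IsException Pr S a b)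
    (hab : a ≠ b) (ha : a ∈ S) (hb : b ∈ S) :
    ¬ isTTC Pr (extendByTTC S (submarketMech S a b) Pr) := by
  rintro ⟨-, r, hr⟩
  have hxR := hE.best_erase_mem hab hb
  have hφa : extendByTTC S (submarketMech S a b) Pr a = b := by
    rw [extendByTTC_of_mem hiso ha, submarketMech, if_pos hE, hE.exceptionalAlloc_apply_left hab hb]
  have hφb : extendByTTC S (submarketMech S a b) Pr b = best (Pr b) (S.erase a) := by
    rw [extendByTTC_of_mem hiso hb, submarketMech, if_pos hE,
      hE.exceptionalAlloc_apply_right hab hb]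
  -- `a` trades with `b`, so TTC would have to give `b` its favourite object `a`
  have hra : r b ≤ r a := ((congrArg r hφa).symm.trans (hr a).1).le
  have h₁ := (hr b).2 a hra (hφb ▸ Ne.symm (mem_sdiff_pair.1 hxR).2.1)
  rw [hφb] at h₁
  have h₂ := best_rel (P := Pr b) (mem_sdiff_pair.1 hxR).1 (hE.2.1 ▸ (mem_sdiff_pair.1 hxR).2.1)
  rw [hE.2.1] at h₂
  exact asymm h₁ h₂

theorem exists_isIsolated_isException {D : Set (PrefRel n)}
    (hD : ∀ P ∈ D, IsStrictTotalOrder (Fin n) P) {S : Finset (Fin n)} {a b : Fin n} (hab : a ≠ b)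
    (ha : a ∈ S) (hb : b ∈ S) {PA PB : PrefRel n} (hPA : PA ∈ D) (hPB : PB ∈ D)
    (hPAa : top PA S a) (hPBb : top PB S b) (hgap : best PA (S.erase a) ≠ b)
    (hout : ∀ o : Fin n, o ∉ (S : Set (Fin n)) → ∃ P ∈ D, top P (S ∪ {o}) o) :
    ∃ P : Profile n (fun _ => D), IsIsolated P.1 S ∧ IsException P.1 S a b := by
  choose R hRD hR using hout
  let P : Fin n → PrefRel n := fun i => if h : i ∈ S then (if i = a then PB else PA) else R i h
  have hP : ∀ i, P i ∈ D := fun i => by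
    unfold P
    split_ifs
    exacts [hPB, hPA, hRD _ _]
  have hPa : P a = PB := by simp [P, ha]
  have hPS : ∀ j ∈ S, j ≠ a → P j = PA := fun j hj hja => by simp [P, hj, hja]
  refine ⟨⟨P, hP⟩, fun k hk o ho => ?_, ?_⟩
  · have := (hR k hk).2 o (Or.inl ho) fun h => hk (h ▸ ho)
    simpa [P, hk] using this
  show IsException P S a b
  have := hD PA hPA
  have := hD PB hPB
  have hPb := hPS b hb hab.symm
  refine ⟨by rw [hPa]; exact (top_coe_iff hb).1 hPBb, by rw [hPb]; exact (top_coe_iff ha).1 hPAa,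
    by rw [hPb]; exact hgap, fun j hj k hk hjk => absurd ?_ (mem_sdiff_pair.1 hk).2.1⟩
  rw [← hjk, ptr, hPS j (mem_sdiff_pair.1 hj).1 (mem_sdiff_pair.1 hj).2.1]
  exact best_eq_of_forall (mem_erase.2 ⟨hab, ha⟩) fun c hc hne =>
    hPAa.2 c (mem_coe.2 (mem_of_mem_erase hc)) hne

variable (D : Set (PrefRel n)) (S : Finset (Fin n)) (a b : Fin n) in
def mechanism : Profile n (fun _ => D) → Fin n → Fin n :=
  fun P => extendByTTC S (submarketMech S a b) P.1

variable {D : Set (PrefRel n)} {S : Finset (Fin n)} {a b : Fin n}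

theorem mechanism_bijective (hD : ∀ P ∈ D, IsStrictTotalOrder (Fin n) P) (hab : a ≠ b)
    (ha : a ∈ S) (hb : b ∈ S) (P : Profile n fun _ => D) : Bijective (mechanism D S a b P) := by
  have := fun i => hD _ (P.2 i)
  exact Finite.injective_iff_bijective.1
    (extendByTTC_injective (submarketMech_mapsTo hab ha hb) submarketMech_injective.injOn)

theorem IR_mechanism (hD : ∀ P ∈ D, IsStrictTotalOrder (Fin n) P) (hab : a ≠ b) (ha : a ∈ S)
    (hb : b ∈ S) (hR : (S \ {a, b}).card ≤ 2) : IR (mechanism D S a b) := fun P i => by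
  have := fun i => hD _ (P.2 i)
  exact extendByTTC_IR (fun i _ => submarketMech_IR hab ha hb hR i) i

theorem paretoEff_mechanism (hD : ∀ P ∈ D, IsStrictTotalOrder (Fin n) P) (hab : a ≠ b)
    (ha : a ∈ S) (hb : b ∈ S) (hR : (S \ {a, b}).card ≤ 2) : ParetoEff (mechanism D S a b) :=
  fun P y hy hdom i => by
    have := fun i => hD _ (P.2 i)
    exact extendByTTC_isParetoOn (submarketMech_isParetoOn hab ha hb hR) y
      (fun _ _ => mem_coe.2 (mem_univ _)) hy.injective.injOn (fun i _ => hdom i)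
      (mem_coe.2 (mem_univ i))

theorem SP_mechanism (hD : ∀ P ∈ D, IsStrictTotalOrder (Fin n) P)
    (hgap : ∀ P ∈ D, best P S = a → best P (S.erase a) ≠ b) (hab : a ≠ b) (ha : a ∈ S)
    (hb : b ∈ S) (hR : (S \ {a, b}).card ≤ 2) : SP (mechanism D S a b) := fun P Q i hagree => by
  have := fun i => hD _ (P.2 i)
  have := fun i => hD _ (Q.2 i)
  exact extendByTTC_SP hagree fun hi _ =>
    submarketMech_SP hagree (hgap _ (P.2 b)) (hgap _ (Q.2 b)) hi hab ha hb hR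

theorem exists_not_isTTC_mechanism (hD : ∀ P ∈ D, IsStrictTotalOrder (Fin n) P) (hab : a ≠ b)
    (ha : a ∈ S) (hb : b ∈ S) {PA PB : PrefRel n} (hPA : PA ∈ D) (hPB : PB ∈ D)
    (hPAa : top PA S a) (hPBb : top PB S b) (hgap : best PA (S.erase a) ≠ b)
    (hout : ∀ o : Fin n, o ∉ (S : Set (Fin n)) → ∃ P ∈ D, top P (S ∪ {o}) o) :
    ∃ P, ¬ isTTC P.1 (mechanism D S a b P) := by
  obtain ⟨P, hiso, hE⟩ := exists_isIsolated_isException hD hab ha hb hPA hPB hPAa hPBb hgap hout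
  have := fun i => hD _ (P.2 i)
  exact ⟨P, not_isTTC_of_isException hiso hE hab ha hb⟩

end Fin

end HousingMarket

open HousingMarket Finset in
theorem stmt17 {n : ℕ} (D : Set (PrefRel n))
    (hD : ∀ P ∈ D, IsStrictTotalOrder (Fin n) P)
    (O' : Set (Fin n)) (hcard : O'.ncard ≤ 4)
    (hfail : failsTopTwoFor D O')
    (hout : ∀ o : Fin n, o ∉ O' → ∃ P ∈ D, top P (O' ∪ {o}) o) :
    ∃ φ : Profile n (fun _ => D) → Fin n → Fin n,
      (∀ P, Function.Bijective (φ P)) ∧ IR φ ∧ ParetoEff φ ∧ SP φ ∧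
      ∃ P, ¬ isTTC P.1 (φ P) := by
  obtain ⟨a, b, ha, hb, hab, ⟨PA, hPA, hPAa⟩, ⟨PB, hPB, hPBb⟩, hgap⟩ := hfail
  have : Nonempty (Fin n) := ⟨a⟩
  obtain ⟨S, rfl⟩ : ∃ S : Finset (Fin n), ↑S = O' := ⟨_, (Set.toFinite O').coe_toFinset⟩
  rw [mem_coe] at ha hb
  rw [Set.ncard_coe_finset] at hcard
  have hR : (S \ {a, b}).card ≤ 2 := by
    rw [card_sdiff_of_subset (by simp [insert_subset_iff, ha, hb]), card_pair hab]
    omega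
  have hgap' : ∀ P ∈ D, best P S = a → best P (S.erase a) ≠ b := fun P hP h h' => by
    have := hD P hP
    refine hgap P hP ((top_coe_iff ha).2 h) ?_
    rw [← coe_erase]
    exact (top_coe_iff (mem_erase.2 ⟨hab.symm, hb⟩)).2 h'
  have := hD PA hPA
  exact ⟨mechanism D S a b, mechanism_bijective hD hab ha hb, IR_mechanism hD hab ha hb hR,
    paretoEff_mechanism hD hab ha hb hR, SP_mechanism hD hgap' hab ha hb hR,
    exists_not_isTTC_mechanism hD hab ha hb hPA hPB hPAa hPBb
      (hgap' PA hPA ((top_coe_iff ha).1 hPAa)) hout⟩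
end
end
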